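/- arXiv:1305.5910 — 4 statements merged into one kernel-verified Lean document; each statement's English description precedes it below -/
import Mathlib

section
/- A Hamiltonian operator matrix H is symplectic self-adjoint (JH = (JH)*) if and only if Ran(H + iJ) = X × X and Ran(H - iJ) = X × X. -/
open LinearPMap

section Abstract
variable {E : Type*} [NormedAddCommGroup E] [InnerProductSpace ℂ E] [CompleteSpace E]

local notation "⟪" x ", " y "⟫" => @inner ℂ _ _ x y

theorem mem_adjoint_graph' (S : E →ₗ.[ℂ] E) (hSd : Dense (S.domain : Set E)) {y z : E}
    (h : ∀ x : S.domain, ⟪z, (x : E)⟫ = ⟪y, S x⟫) : (y, z) ∈ S.adjoint.graph := by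
  have hy : y ∈ S.adjoint.domain := LinearPMap.mem_adjoint_domain_of_exists y ⟨z, h⟩
  have h2 : S.adjoint ⟨y, hy⟩ = z := LinearPMap.adjoint_apply_eq hSd ⟨y, hy⟩ h
  rw [LinearPMap.mem_graph_iff]
  exact ⟨⟨y, hy⟩, rfl, h2⟩

theorem surj_of_selfAdjoint (S : E →ₗ.[ℂ] E) (hSd : Dense (S.domain : Set E))
    (hsym : S.IsFormalAdjoint S) (hSA : S.adjoint = S) (c : ℂ)
    (hc : c = Complex.I ∨ c = -Complex.I) (v : E) :
    ∃ u : S.domain, S u + c • (u : E) = v := by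
  have hcc : (starRingEnd ℂ) c = -c := by rcases hc with h | h <;> simp [h]
  -- ⟪S u, u⟫ is real
  have hreal : ∀ u : S.domain, (starRingEnd ℂ) ⟪S u, (u : E)⟫ = ⟪S u, (u : E)⟫ := by
    intro u
    rw [inner_conj_symm]
    exact (hsym u u).symm
  -- norm identity
  have hnorm : ∀ u : S.domain, ‖S u + c • (u : E)‖ ^ 2 = ‖S u‖ ^ 2 + ‖(u : E)‖ ^ 2 := by
    intro u
    have hre : RCLike.re ⟪S u, c • (u : E)⟫ = 0 := by
      rw [inner_smul_right]
      have him : (⟪S u, (u : E)⟫).im = 0 := by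
        have := hreal u
        rw [Complex.conj_eq_iff_im] at this
        exact this
      rcases hc with h | h <;>
        simp [h, Complex.mul_re, Complex.I_re, Complex.I_im, him]
    have hn : ‖c‖ = 1 := by rcases hc with h | h <;> simp [h]
    rw [@norm_add_sq ℂ, hre, norm_smul, hn]
    ring
  have hineq : ∀ u : S.domain, ‖(u : E)‖ ≤ ‖S u + c • (u : E)‖ ∧ ‖S u‖ ≤ ‖S u + c • (u : E)‖ := by
    intro u
    have h := hnorm u
    constructor <;>
      nlinarith [norm_nonneg (S u + c • (u : E)), norm_nonneg (S u), norm_nonneg ((u : E))]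
  -- the range submodule
  set T : S.domain →ₗ[ℂ] E := S.toFun + c • S.domain.subtype with hT
  have hTa : ∀ u : S.domain, T u = S u + c • (u : E) := fun u => rfl
  -- density of the range
  have hMd : Dense ((LinearMap.range T : Submodule ℂ E) : Set E) := by
    have horth : (LinearMap.range T)ᗮ = ⊥ := by
      rw [Submodule.eq_bot_iff]
      intro z hz
      rw [Submodule.mem_orthogonal] at hz
      have h0 : ∀ u : S.domain, ⟪S u + c • (u : E), z⟫ = 0 := fun u =>
        hz _ ⟨u, rfl⟩
      have h1 : ∀ u : S.domain, ⟪(-(starRingEnd ℂ c)) • z, (u : E)⟫ = ⟪z, S u⟫ := by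
        intro u
        have := congrArg (starRingEnd ℂ) (h0 u)
        rw [_root_.map_zero, inner_conj_symm, inner_add_right, inner_smul_right] at this
        rw [inner_smul_left]
        simp only [_root_.map_neg, Complex.conj_conj]
        linear_combination -this
      have hzg : (z, (-(starRingEnd ℂ c)) • z) ∈ S.adjoint.graph := mem_adjoint_graph' S hSd h1
      rw [hSA] at hzg
      obtain ⟨u0, hu0, hu0'⟩ := S.mem_graph_iff.1 hzg
      dsimp only at hu0 hu0'
      have h2 := h0 u0
      rw [hu0', hu0, inner_add_left, inner_smul_left, inner_smul_left] at h2
      have h3 : ((starRingEnd ℂ) c - c) * ⟪z, z⟫ = 0 := by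
        simp only [_root_.map_neg, Complex.conj_conj] at h2
        linear_combination h2
      have h4 : (starRingEnd ℂ) c - c ≠ 0 := by
        rcases hc with h | h <;> simp [h, Complex.ext_iff] <;> norm_num
      have h5 : ⟪z, z⟫ = 0 := by
        rcases mul_eq_zero.1 h3 with h | h
        · exact absurd h h4
        · exact h
      exact inner_self_eq_zero.1 h5
    exact Submodule.dense_iff_topologicalClosure_eq_top.2
      (Submodule.topologicalClosure_eq_top_iff.2 horth)
  -- approximate v by elements of the range, extract Cauchy sequences
  obtain ⟨f, hfM, hfv⟩ := mem_closure_iff_seq_limit.1 (hMd v)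
  choose un hun using hfM
  have hdiff : ∀ m n : ℕ, ‖(un m : E) - (un n : E)‖ ≤ ‖f m - f n‖ ∧
      ‖S (un m) - S (un n)‖ ≤ ‖f m - f n‖ := by
    intro m n
    have e1 : ((un m - un n : S.domain) : E) = (un m : E) - (un n : E) := rfl
    have e2 : S (un m - un n) = S (un m) - S (un n) := S.map_sub _ _
    have e3 : S (un m - un n) + c • ((un m - un n : S.domain) : E) = f m - f n := by
      rw [e2, e1, smul_sub, ← hun m, ← hun n, hTa, hTa]
      abel
    have h1 := (hineq (un m - un n)).1
    have h2 := (hineq (un m - un n)).2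
    rw [e3, e1] at h1
    rw [e3, e2] at h2
    exact ⟨h1, h2⟩
  have hfc : CauchySeq f := hfv.cauchySeq
  have hc1 : CauchySeq (fun n => (un n : E)) := by
    rw [Metric.cauchySeq_iff] at hfc ⊢
    intro ε hε
    obtain ⟨N, hN⟩ := hfc ε hε
    refine ⟨N, fun m hm n hn => ?_⟩
    rw [dist_eq_norm]
    calc ‖(un m : E) - (un n : E)‖ ≤ ‖f m - f n‖ := (hdiff m n).1
      _ < ε := by rw [← dist_eq_norm]; exact hN m hm n hn
  have hc2 : CauchySeq (fun n => S (un n)) := by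
    rw [Metric.cauchySeq_iff] at hfc ⊢
    intro ε hε
    obtain ⟨N, hN⟩ := hfc ε hε
    refine ⟨N, fun m hm n hn => ?_⟩
    rw [dist_eq_norm]
    calc ‖S (un m) - S (un n)‖ ≤ ‖f m - f n‖ := (hdiff m n).2
      _ < ε := by rw [← dist_eq_norm]; exact hN m hm n hn
  obtain ⟨y, hy⟩ := cauchySeq_tendsto_of_complete hc1
  obtain ⟨w, hw⟩ := cauchySeq_tendsto_of_complete hc2
  have hSlim : Filter.Tendsto (fun n => S (un n)) Filter.atTop (nhds (v - c • y)) := by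
    have heq : (fun n => S (un n)) = fun n => f n - c • (un n : E) := by
      funext n
      rw [← hun n, hTa]
      abel
    rw [heq]
    exact hfv.sub (hy.const_smul c)
  have hwv : w = v - c • y := tendsto_nhds_unique hw hSlim
  have hkey : ∀ x : S.domain, ⟪w, (x : E)⟫ = ⟪y, S x⟫ := by
    intro x
    have l1 : Filter.Tendsto (fun n => ⟪S (un n), (x : E)⟫) Filter.atTop (nhds ⟪w, (x : E)⟫) :=
      hw.inner tendsto_const_nhds
    have l2 : Filter.Tendsto (fun n => ⟪S (un n), (x : E)⟫) Filter.atTop (nhds ⟪y, S x⟫) := by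
      have heq : (fun n => ⟪S (un n), (x : E)⟫) = fun n => ⟪(un n : E), S x⟫ :=
        funext fun n => hsym (un n) x
      rw [heq]
      exact hy.inner tendsto_const_nhds
    exact tendsto_nhds_unique l1 l2
  have hg := mem_adjoint_graph' S hSd hkey
  rw [hSA] at hg
  obtain ⟨u, hu1, hu2⟩ := S.mem_graph_iff.1 hg
  dsimp only at hu1 hu2
  refine ⟨u, ?_⟩
  rw [hu2, hu1, hwv]
  abel

theorem selfAdjoint_of_surj (S : E →ₗ.[ℂ] E) (hSd : Dense (S.domain : Set E))
    (hsym : S.IsFormalAdjoint S)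
    (h1 : ∀ v : E, ∃ u : S.domain, S u - Complex.I • (u : E) = v)
    (h2 : ∀ v : E, ∃ u : S.domain, S u + Complex.I • (u : E) = v) :
    S.adjoint = S := by
  have hle : S ≤ S.adjoint := hsym.le_adjoint hSd
  refine le_antisymm ?_ hle
  apply LinearPMap.le_of_le_graph
  rintro ⟨p, q⟩ hpq
  obtain ⟨ym, hy1, hy2⟩ := S.adjoint.mem_graph_iff.1 hpq
  dsimp only at hy1 hy2
  obtain ⟨u, hu⟩ := h2 (S.adjoint ym + Complex.I • (ym : E))
  set z : E := (ym : E) - (u : E) with hzdef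
  have hzg : (z, -(Complex.I • z)) ∈ S.adjoint.graph := by
    have g1 : ((ym : E), S.adjoint ym) ∈ S.adjoint.graph := S.adjoint.mem_graph ym
    have g2 : ((u : E), S u) ∈ S.adjoint.graph :=
      LinearPMap.le_graph_of_le hle (S.mem_graph u)
    have g3 := Submodule.sub_mem _ g1 g2
    have heq : ((ym : E), S.adjoint ym) - ((u : E), S u) = (z, -(Complex.I • z)) := by
      have hq : S.adjoint ym - S u = -(Complex.I • z) := by
        rw [hzdef, smul_sub]
        linear_combination (norm := module) -hu
      rw [Prod.mk_sub_mk, hq]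
    rwa [heq] at g3
  obtain ⟨zz, hzz1, hzz2⟩ := S.adjoint.mem_graph_iff.1 hzg
  dsimp only at hzz1 hzz2
  have horth : ∀ x : S.domain, ⟪z, S x - Complex.I • (x : E)⟫ = 0 := by
    intro x
    have hfa := LinearPMap.adjoint_isFormalAdjoint hSd zz x
    rw [hzz2, hzz1] at hfa
    rw [inner_sub_right, inner_smul_right, ← hfa, inner_neg_left, inner_smul_left]
    simp [Complex.conj_I]
  obtain ⟨w0, hw0⟩ := h1 z
  have hz0 : z = 0 := by
    have := horth w0
    rw [hw0] at this
    exact inner_self_eq_zero.1 this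
  have hyu : (ym : E) = (u : E) := by
    have := sub_eq_zero.1 hz0
    exact this
  have hq : S.adjoint ym = S u := by
    have h' : S.adjoint ym - S u = -(Complex.I • z) := by
      rw [hzdef, smul_sub]
      linear_combination (norm := module) -hu
    rw [hz0, smul_zero, neg_zero] at h'
    exact sub_eq_zero.1 h'
  rw [S.mem_graph_iff]
  exact ⟨u, by rw [← hy1, hyu], by rw [← hy2, hq]⟩

theorem selfAdjoint_iff_surj (S : E →ₗ.[ℂ] E) (hSd : Dense (S.domain : Set E))
    (hsym : S.IsFormalAdjoint S) :
    S.adjoint = S ↔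
      ((∀ v : E, ∃ u : S.domain, S u - Complex.I • (u : E) = v) ∧
       (∀ v : E, ∃ u : S.domain, S u + Complex.I • (u : E) = v)) := by
  constructor
  · intro hSA
    constructor
    · intro v
      obtain ⟨u, hu⟩ := surj_of_selfAdjoint S hSd hsym hSA (-Complex.I) (Or.inr rfl) v
      exact ⟨u, by rw [← hu, neg_smul, sub_eq_add_neg]⟩
    · intro v
      exact surj_of_selfAdjoint S hSd hsym hSA Complex.I (Or.inl rfl) v
  · rintro ⟨h1, h2⟩
    exact selfAdjoint_of_surj S hSd hsym h1 h2

end Abstract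

section SelfAdjHelper
variable {Y : Type*} [NormedAddCommGroup Y] [InnerProductSpace ℂ Y] [CompleteSpace Y]

/-- A self-adjoint `LinearPMap` is its own formal adjoint. -/
theorem isFormalAdjoint_self_of_selfAdjoint (C : Y →ₗ.[ℂ] Y) (hCd : Dense (C.domain : Set Y))
    (hCsa : C.adjoint = C) : C.IsFormalAdjoint C := by
  have h := LinearPMap.adjoint_isFormalAdjoint hCd
  rwa [hCsa] at h

end SelfAdjHelper


variable {X : Type*} [NormedAddCommGroup X] [InnerProductSpace ℂ X] [CompleteSpace X]

/-- The product Hilbert space `X × X` (with the ℓ² norm, so that it is again a Hilbert space). -/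
abbrev ProdX (X : Type*) [NormedAddCommGroup X] [InnerProductSpace ℂ X] := WithLp 2 (X × X)

/-- The unit symplectic operator `J = [[0, I], [-I, 0]]`, `J(x, y) = (y, -x)`. -/
noncomputable def symplJ (X : Type*) [NormedAddCommGroup X] [InnerProductSpace ℂ X] :
    ProdX X →ₗ[ℂ] ProdX X :=
  ((WithLp.linearEquiv 2 ℂ (X × X)).symm.toLinearMap.comp
      ((LinearMap.snd ℂ X X).prod (-LinearMap.fst ℂ X X))).comp
    (WithLp.linearEquiv 2 ℂ (X × X)).toLinearMap

/-- `H` is the Hamiltonian block operator matrix `[[A, B], [C, -A*]]` with its natural domain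
`(D(A) ∩ D(C)) × (D(B) ∩ D(A*))`. -/
def IsHamiltonianMatrix (A B C : X →ₗ.[ℂ] X) (H : ProdX X →ₗ.[ℂ] ProdX X) : Prop :=
  H.domain = ((A.domain ⊓ C.domain).prod (B.domain ⊓ A.adjoint.domain)).comap
      (WithLp.linearEquiv 2 ℂ (X × X)).toLinearMap ∧
  ∀ (u : H.domain) (h₁ : (WithLp.equiv 2 (X × X) (u : ProdX X)).1 ∈ A.domain) (h₂ : (WithLp.equiv 2 (X × X) (u : ProdX X)).1 ∈ C.domain)
      (h₃ : (WithLp.equiv 2 (X × X) (u : ProdX X)).2 ∈ B.domain) (h₄ : (WithLp.equiv 2 (X × X) (u : ProdX X)).2 ∈ A.adjoint.domain),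
    WithLp.equiv 2 (X × X) (H u) =
      (A ⟨(WithLp.equiv 2 (X × X) (u : ProdX X)).1, h₁⟩ + B ⟨(WithLp.equiv 2 (X × X) (u : ProdX X)).2, h₃⟩,
       C ⟨(WithLp.equiv 2 (X × X) (u : ProdX X)).1, h₂⟩ - A.adjoint ⟨(WithLp.equiv 2 (X × X) (u : ProdX X)).2, h₄⟩)


/-- A Hamiltonian operator matrix `H` is symplectic self-adjoint
(`JH = (JH)*`) iff `Ran(H + iJ) = X × X` and `Ran(H - iJ) = X × X`. -/
theorem symplectic_selfAdjoint_iff_range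
    {X : Type*} [NormedAddCommGroup X] [InnerProductSpace ℂ X] [CompleteSpace X]
    (A B C : X →ₗ.[ℂ] X) (H : ProdX X →ₗ.[ℂ] ProdX X)
    (hA : A.IsClosed) (hB : B.IsClosed) (hC : C.IsClosed)
    (hAd : Dense (A.domain : Set X)) (hBd : Dense (B.domain : Set X))
    (hCd : Dense (C.domain : Set X))
    (hBsa : B.adjoint = B) (hCsa : C.adjoint = C)
    (hH : IsHamiltonianMatrix A B C H) (hHd : Dense (H.domain : Set (ProdX X))) :
    ((symplJ X).compPMap H).adjoint = (symplJ X).compPMap H ↔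
      ((∀ v : ProdX X, ∃ u : H.domain, H u + Complex.I • symplJ X (u : ProdX X) = v) ∧
       (∀ v : ProdX X, ∃ u : H.domain, H u - Complex.I • symplJ X (u : ProdX X) = v)) := by
  classical
  set S : ProdX X →ₗ.[ℂ] ProdX X := (symplJ X).compPMap H with hSdef
  have hSd : Dense (S.domain : Set (ProdX X)) := hHd
  -- component memberships for elements of the domain of `H`
  have hmem : ∀ u : H.domain, (WithLp.equiv 2 (X × X) (u : ProdX X)).1 ∈ A.domain ∧
      (WithLp.equiv 2 (X × X) (u : ProdX X)).1 ∈ C.domain ∧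
      (WithLp.equiv 2 (X × X) (u : ProdX X)).2 ∈ B.domain ∧
      (WithLp.equiv 2 (X × X) (u : ProdX X)).2 ∈ A.adjoint.domain := by
    intro u
    have h : (u : ProdX X) ∈ ((A.domain ⊓ C.domain).prod
        (B.domain ⊓ A.adjoint.domain)).comap (WithLp.linearEquiv 2 ℂ (X × X)).toLinearMap := by
      rw [← hH.1]
      exact u.2
    rw [Submodule.mem_comap] at h
    have h2 := Submodule.mem_prod.1 h
    exact ⟨(Submodule.mem_inf.1 h2.1).1, (Submodule.mem_inf.1 h2.1).2,
           (Submodule.mem_inf.1 h2.2).1, (Submodule.mem_inf.1 h2.2).2⟩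
  -- symmetry of S = J ∘ H
  have hsym : S.IsFormalAdjoint S := by
    intro u v
    obtain ⟨hA1, hC1, hB1, hAd1⟩ := hmem u
    obtain ⟨hA2, hC2, hB2, hAd2⟩ := hmem v
    have hu := hH.2 u hA1 hC1 hB1 hAd1
    have hv := hH.2 v hA2 hC2 hB2 hAd2
    have e1 : (WithLp.equiv 2 (X × X) (S u : ProdX X)).1 =
        C ⟨_, hC1⟩ - A.adjoint ⟨_, hAd1⟩ := by
      show (WithLp.equiv 2 (X × X) (H u)).2 = _
      rw [hu]
    have e2 : (WithLp.equiv 2 (X × X) (S u : ProdX X)).2 =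
        -(A ⟨_, hA1⟩ + B ⟨_, hB1⟩) := by
      show -(WithLp.equiv 2 (X × X) (H u)).1 = _
      rw [hu]
    have f1 : (WithLp.equiv 2 (X × X) (S v : ProdX X)).1 =
        C ⟨_, hC2⟩ - A.adjoint ⟨_, hAd2⟩ := by
      show (WithLp.equiv 2 (X × X) (H v)).2 = _
      rw [hv]
    have f2 : (WithLp.equiv 2 (X × X) (S v : ProdX X)).2 =
        -(A ⟨_, hA2⟩ + B ⟨_, hB2⟩) := by
      show -(WithLp.equiv 2 (X × X) (H v)).1 = _
      rw [hv]
    have hinner : ∀ p q : ProdX X, (inner ℂ p q : ℂ) =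
        inner ℂ (WithLp.equiv 2 (X × X) p).1 (WithLp.equiv 2 (X × X) q).1 +
        inner ℂ (WithLp.equiv 2 (X × X) p).2 (WithLp.equiv 2 (X × X) q).2 := fun _ _ => rfl
    rw [hinner (S u) (v : ProdX X), hinner (u : ProdX X) (S v), e1, e2, f1, f2]
    have iC := isFormalAdjoint_self_of_selfAdjoint C hCd hCsa ⟨_, hC1⟩ ⟨_, hC2⟩
    have iB := isFormalAdjoint_self_of_selfAdjoint B hBd hBsa ⟨_, hB1⟩ ⟨_, hB2⟩
    have iA1 := LinearPMap.adjoint_isFormalAdjoint hAd ⟨_, hAd1⟩ ⟨_, hA2⟩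
    have iA2 := (LinearPMap.adjoint_isFormalAdjoint hAd).symm ⟨_, hA1⟩ ⟨_, hAd2⟩
    simp only [inner_sub_left, inner_sub_right, inner_neg_left, inner_neg_right,
      inner_add_left, inner_add_right]
    linear_combination iC - iB - iA1 - iA2
  have hiff := selfAdjoint_iff_surj S hSd hsym
  rw [hiff]
  -- translation between ranges of `S ∓ i` and `H ± iJ`
  have key1 : ∀ (u : H.domain) (v : ProdX X),
      S u - Complex.I • (u : ProdX X) = symplJ X v ↔
      H u + Complex.I • symplJ X (u : ProdX X) = v := by
    intro u v
    constructor
    · intro h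
      have h2 := congrArg (symplJ X) h
      rw [_root_.map_sub, LinearMap.map_smul] at h2
      rw [show symplJ X (S u : ProdX X) = -(H u) from rfl,
        show symplJ X (symplJ X v) = -v from rfl] at h2
      linear_combination (norm := module) -h2
    · intro h
      have h2 := congrArg (symplJ X) h
      rw [_root_.map_add, LinearMap.map_smul] at h2
      rw [show symplJ X (symplJ X (u : ProdX X)) = -(u : ProdX X) from rfl] at h2
      show symplJ X (H u) - Complex.I • (u : ProdX X) = symplJ X v
      linear_combination (norm := module) h2
  have key2 : ∀ (u : H.domain) (v : ProdX X),
      S u + Complex.I • (u : ProdX X) = symplJ X v ↔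
      H u - Complex.I • symplJ X (u : ProdX X) = v := by
    intro u v
    constructor
    · intro h
      have h2 := congrArg (symplJ X) h
      rw [_root_.map_add, LinearMap.map_smul] at h2
      rw [show symplJ X (S u : ProdX X) = -(H u) from rfl,
        show symplJ X (symplJ X v) = -v from rfl] at h2
      linear_combination (norm := module) -h2
    · intro h
      have h2 := congrArg (symplJ X) h
      rw [_root_.map_sub, LinearMap.map_smul] at h2
      rw [show symplJ X (symplJ X (u : ProdX X)) = -(u : ProdX X) from rfl] at h2
      show symplJ X (H u) + Complex.I • (u : ProdX X) = symplJ X v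
      linear_combination (norm := module) h2
  constructor
  · rintro ⟨h1, h2⟩
    constructor
    · intro v
      obtain ⟨u, hu⟩ := h1 (symplJ X v)
      exact ⟨u, (key1 u v).1 hu⟩
    · intro v
      obtain ⟨u, hu⟩ := h2 (symplJ X v)
      exact ⟨u, (key2 u v).1 hu⟩
  · rintro ⟨h1, h2⟩
    constructor
    · intro v
      obtain ⟨u, hu⟩ := h1 (-(symplJ X v))
      refine ⟨u, ?_⟩
      have := (key1 u (-(symplJ X v))).2 hu
      rw [_root_.map_neg, show symplJ X (symplJ X v) = -v from rfl, neg_neg] at this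
      exact this
    · intro v
      obtain ⟨u, hu⟩ := h2 (-(symplJ X v))
      refine ⟨u, ?_⟩
      have := (key2 u (-(symplJ X v))).2 hu
      rw [_root_.map_neg, show symplJ X (symplJ X v) = -v from rfl, neg_neg] at this
      exact this
end

section
/- Let T be a closed densely defined operator on a Hilbert space such that Ran(T) is closed and of finite codimension, and let S be densely defined. Then ST is densely defined and (ST)* = T*S*. -/
open LinearPMap

section Aux
variable {X : Type*} [NormedAddCommGroup X] [InnerProductSpace ℂ X] [CompleteSpace X]

-- Open mapping bound for a closed pmap with closed range
theorem pmap_open_bound (T : X →ₗ.[ℂ] X) (hT : T.IsClosed)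
    (hran : IsClosed ((LinearMap.range T.toFun : Submodule ℂ X) : Set X)) :
    ∃ C > 0, ∀ u ∈ (LinearMap.range T.toFun : Submodule ℂ X),
      ∃ x : T.domain, T x = u ∧ ‖(x : X)‖ ≤ C * ‖u‖ := by
  set R : Submodule ℂ X := LinearMap.range T.toFun with hR
  haveI : CompleteSpace T.graph := hT.completeSpace_coe
  haveI : CompleteSpace R := hran.completeSpace_coe
  set φ : T.graph →L[ℂ] X := (ContinuousLinearMap.snd ℂ X X).comp (Submodule.subtypeL T.graph)
    with hφ
  have hmem : ∀ g : T.graph, φ g ∈ R := by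
    rintro ⟨⟨a, b⟩, hg⟩
    rw [T.mem_graph_iff] at hg
    obtain ⟨x, hx1, hx2⟩ := hg
    exact ⟨x, show T.toFun x = b from hx2⟩
  set Φ : T.graph →L[ℂ] R := φ.codRestrict R hmem with hΦ
  have hsurj : Function.Surjective Φ := by
    rintro ⟨u, hu⟩
    obtain ⟨x, hx⟩ := hu
    exact ⟨⟨(↑x, T x), T.mem_graph x⟩, Subtype.ext hx⟩
  obtain ⟨C, hC, h⟩ := Φ.exists_preimage_norm_le hsurj
  refine ⟨C, hC, fun u hu => ?_⟩
  obtain ⟨g, hg1, hg2⟩ := h ⟨u, hu⟩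
  obtain ⟨⟨a, b⟩, hg⟩ := g
  have hb : b = u := congrArg Subtype.val hg1
  rw [T.mem_graph_iff] at hg
  obtain ⟨x, hx1, hx2⟩ := hg
  refine ⟨x, by rw [hx2, hb], ?_⟩
  calc ‖(x : X)‖ = ‖a‖ := by rw [hx1]
    _ ≤ ‖((a, b) : X × X)‖ := norm_fst_le (a,b)
    _ ≤ C * ‖u‖ := hg2


theorem exists_compl_in_dense (R D : Submodule ℂ X) (hRc : IsClosed (R : Set X))
    [FiniteDimensional ℂ (X ⧸ R)] (hD : Dense (D : Set X)) :
    ∃ F : Submodule ℂ X, F ≤ D ∧ FiniteDimensional ℂ F ∧ ∃ πR πF : X →L[ℂ] X,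
      (∀ x, πR x ∈ R) ∧ (∀ x, πF x ∈ F) ∧ (∀ x, πR x + πF x = x) ∧ ∀ x ∈ R, πR x = x := by
  haveI : IsClosed (R : Set X) := hRc
  have hqc : Continuous R.mkQ :=
    AddMonoidHomClass.continuous_of_bound R.mkQ 1 fun x => by
      simpa [one_mul] using Submodule.Quotient.norm_mk_le R x
  have hdr : DenseRange (⇑R.mkQ) := R.mkQ_surjective.denseRange
  have hdense : Dense ((D.map R.mkQ : Submodule ℂ (X ⧸ R)) : Set (X ⧸ R)) := by
    rw [Submodule.map_coe]
    exact hdr.dense_image hqc hD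
  have htop : D.map R.mkQ = ⊤ := by
    have hcl := (D.map R.mkQ).closed_of_finiteDimensional
    apply Submodule.eq_top_iff'.mpr
    intro x
    have : ((D.map R.mkQ : Submodule ℂ (X ⧸ R)) : Set (X ⧸ R)) = Set.univ := by
      rw [← hcl.closure_eq]; exact hdense.closure_eq
    exact (Set.eq_univ_iff_forall.mp this) x
  set qD : D →ₗ[ℂ] X ⧸ R := R.mkQ.comp D.subtype with hqD
  have hqDsurj : LinearMap.range qD = ⊤ := by
    rw [hqD, LinearMap.range_comp, Submodule.range_subtype, htop]
  obtain ⟨σ, hσ⟩ := qD.exists_rightInverse_of_surjective hqDsurj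
  set j : (X ⧸ R) →ₗ[ℂ] X := D.subtype.comp σ with hj
  have hjq : ∀ v, R.mkQ (j v) = v := fun v => by
    have := LinearMap.congr_fun hσ v
    simpa [hqD, hj] using this
  refine ⟨LinearMap.range j, ?_, inferInstance, ?_⟩
  · rintro x ⟨v, rfl⟩
    exact (σ v).2
  set F : Submodule ℂ X := LinearMap.range j with hF
  haveI : CompleteSpace R := hRc.completeSpace_coe
  haveI : FiniteDimensional ℂ F := inferInstance
  haveI : CompleteSpace F := FiniteDimensional.complete ℂ F
  set e : (R × F) →L[ℂ] X := R.subtypeL.coprod F.subtypeL with he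
  have heapp : ∀ p : R × F, e p = (p.1 : X) + (p.2 : X) := fun p => rfl
  have hker : LinearMap.ker (e : R × F →ₗ[ℂ] X) = ⊥ := by
    rw [LinearMap.ker_eq_bot']
    rintro ⟨r, f⟩ hrf
    have hrf' : (r : X) + (f : X) = 0 := hrf
    obtain ⟨v, hv⟩ := f.2
    have h0 : R.mkQ ((r : X) + (f : X)) = 0 := by rw [hrf']; simp
    have hr0 : R.mkQ (r : X) = 0 := (Submodule.Quotient.mk_eq_zero R).mpr r.2
    have hv0 : v = 0 := by
      have : R.mkQ (f : X) = v := by rw [← hv]; exact hjq v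
      rw [_root_.map_add, hr0, zero_add, this] at h0
      exact h0
    have hf0 : (f : X) = 0 := by rw [← hv, hv0, _root_.map_zero]
    have hr0' : (r : X) = 0 := by rw [hf0, add_zero] at hrf'; exact hrf'
    ext
    · exact hr0'
    · exact hf0
  have hrange : LinearMap.range (e : R × F →ₗ[ℂ] X) = ⊤ := by
    rw [LinearMap.range_eq_top]
    intro x
    have hx : x - j (R.mkQ x) ∈ R := by
      rw [← Submodule.Quotient.mk_eq_zero]
      have : Submodule.Quotient.mk (p := R) = ⇑R.mkQ := rfl
      rw [this, _root_.map_sub, hjq, sub_self]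
    exact ⟨(⟨x - j (R.mkQ x), hx⟩, ⟨j (R.mkQ x), ⟨R.mkQ x, rfl⟩⟩), by
      show e _ = x; rw [heapp]; simp⟩
  set eq := ContinuousLinearEquiv.ofBijective e hker hrange with heq
  have heqa : ∀ p, eq p = e p := fun p => rfl
  refine ⟨R.subtypeL.comp ((ContinuousLinearMap.fst ℂ R F).comp (eq.symm : X →L[ℂ] R × F)),
    F.subtypeL.comp ((ContinuousLinearMap.snd ℂ R F).comp (eq.symm : X →L[ℂ] R × F)),
    fun x => (eq.symm x).1.2, fun x => (eq.symm x).2.2, fun x => ?_, fun x hx => ?_⟩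
  · have := eq.apply_symm_apply x
    rw [heqa, heapp] at this
    simpa using this
  · have : eq.symm x = (⟨x, hx⟩, 0) := by
      rw [ContinuousLinearEquiv.symm_apply_eq, heqa, heapp]
      simp
    simp [this]

end Aux

local notation "⟪" x ", " y "⟫" => @inner ℂ _ _ x y

/-- `ST` is the composition `S ∘ T` of the unbounded operators `S` and `T`, with its natural
domain `{x ∈ D(T) : Tx ∈ D(S)}`. -/
def IsPMapComp {X : Type*} [NormedAddCommGroup X] [InnerProductSpace ℂ X]
    (S T ST : X →ₗ.[ℂ] X) : Prop :=
  (∀ x : X, x ∈ ST.domain ↔ ∃ h : x ∈ T.domain, T ⟨x, h⟩ ∈ S.domain) ∧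
    ∀ (x : ST.domain) (h : (x : X) ∈ T.domain) (h' : T ⟨(x : X), h⟩ ∈ S.domain),
      ST x = S ⟨T ⟨(x : X), h⟩, h'⟩

set_option maxHeartbeats 2000000 in
/-- If `T` is closed and densely defined with closed range of finite
codimension, and `S` is densely defined, then `ST` is densely defined and `(ST)* = T*S*`. -/
theorem adjoint_comp_of_closed_range_finite_codim
    {X : Type*} [NormedAddCommGroup X] [InnerProductSpace ℂ X] [CompleteSpace X]
    (S T ST : X →ₗ.[ℂ] X) (hST : IsPMapComp S T ST)
    (hT : T.IsClosed) (hTd : Dense (T.domain : Set X)) (hSd : Dense (S.domain : Set X))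
    (hran : IsClosed ((LinearMap.range T.toFun : Submodule ℂ X) : Set X))
    (hcodim : FiniteDimensional ℂ (X ⧸ (LinearMap.range T.toFun : Submodule ℂ X))) :
    Dense (ST.domain : Set X) ∧ IsPMapComp T.adjoint S.adjoint ST.adjoint := by
  obtain ⟨hdom, happ⟩ := hST
  set R : Submodule ℂ X := LinearMap.range T.toFun with hRdef
  obtain ⟨C, hC, hCbound⟩ := pmap_open_bound T hT hran
  haveI : FiniteDimensional ℂ (X ⧸ R) := hcodim
  obtain ⟨F, hFD, hFfin, πR, πF, hπR, hπF, hπsum, hπid⟩ :=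
    exists_compl_in_dense R S.domain hran hSd
  -- density of D(S) ∩ R in R
  have hDR : ∀ r ∈ R, ∀ ε > 0, ∃ u, u ∈ S.domain ∧ u ∈ R ∧ ‖u - r‖ < ε := by
    intro r hr ε hε
    have hrc : r ∈ closure (S.domain : Set X) := hSd r
    rw [Metric.mem_closure_iff] at hrc
    obtain ⟨d, hdS, hdist⟩ := hrc (ε / (‖πR‖ + 1)) (by positivity)
    have hdn : ‖d - r‖ < ε / (‖πR‖ + 1) := by
      rw [← dist_eq_norm, dist_comm]; exact hdist
    refine ⟨πR d, ?_, hπR d, ?_⟩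
    · have h1 : πR d = d - πF d := eq_sub_of_add_eq (hπsum d)
      rw [h1]
      exact sub_mem hdS (hFD (hπF d))
    · have h2 : πR d - r = πR (d - r) := by rw [_root_.map_sub, hπid r hr]
      rw [h2]
      calc ‖πR (d - r)‖ ≤ ‖πR‖ * ‖d - r‖ := πR.le_opNorm _
        _ ≤ (‖πR‖ + 1) * ‖d - r‖ := by nlinarith [norm_nonneg (d - r)]
        _ < (‖πR‖ + 1) * (ε / (‖πR‖ + 1)) := mul_lt_mul_of_pos_left hdn (by positivity)
        _ = ε := by field_simp
  -- graph approximation of D(T) by D(ST)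
  have happrox : ∀ x : T.domain, ∀ ε > 0, ∃ p : T.domain,
      ((p : X) ∈ ST.domain) ∧ ‖(p : X) - (x : X)‖ < ε ∧ ‖(T p : X) - T x‖ < ε := by
    intro x ε hε
    have hTx : (T x : X) ∈ R := ⟨x, rfl⟩
    obtain ⟨u, huS, huR, hun⟩ := hDR (T x) hTx (min (ε / (C + 1)) (ε / 2)) (by positivity)
    obtain ⟨w, hw1, hw2⟩ := hCbound (u - T x) (sub_mem huR hTx)
    have hTp : (T (x + w) : X) = u := by rw [T.map_add, hw1]; abel
    have hun1 : ‖u - T x‖ < ε / (C + 1) := lt_of_lt_of_le hun (min_le_left _ _)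
    have hun2 : ‖u - T x‖ < ε / 2 := lt_of_lt_of_le hun (min_le_right _ _)
    refine ⟨x + w, ?_, ?_, ?_⟩
    · refine (hdom _).mpr ⟨(x + w).2, ?_⟩
      show T (x + w) ∈ S.domain
      rw [hTp]; exact huS
    · have h3 : ((x + w : T.domain) : X) - (x : X) = (w : X) := by
        push_cast; abel
      rw [h3]
      calc ‖(w : X)‖ ≤ C * ‖u - T x‖ := hw2
        _ < C * (ε / (C + 1)) := mul_lt_mul_of_pos_left hun1 hC
        _ < (C + 1) * (ε / (C + 1)) := mul_lt_mul_of_pos_right (by linarith) (by positivity)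
        _ = ε := by field_simp
    · rw [hTp]
      calc ‖u - T x‖ < ε / 2 := hun2
        _ < ε := by linarith
  -- density of D(ST)
  have hSTd : Dense (ST.domain : Set X) := by
    have hsub : (T.domain : Set X) ⊆ closure (ST.domain : Set X) := by
      intro t ht
      rw [Metric.mem_closure_iff]
      intro ε hε
      obtain ⟨p, hp, hpn, _⟩ := happrox ⟨t, ht⟩ ε hε
      exact ⟨↑p, hp, by rw [dist_eq_norm, norm_sub_rev]; exact hpn⟩
    intro x
    exact closure_minimal hsub isClosed_closure (hTd x)
  -- extension of identities from D(ST) to D(T) via graph density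
  have hext : ∀ w z : X, (∀ p : T.domain, ((p : X) ∈ ST.domain) →
        ⟪z, (p : X)⟫ = ⟪w, (T p : X)⟫) →
      ∀ x : T.domain, ⟪z, (x : X)⟫ = ⟪w, (T x : X)⟫ := by
    intro w z h x
    have key : ∀ ε > 0, ‖⟪z, (x : X)⟫ - ⟪w, (T x : X)⟫‖ ≤ (‖z‖ + ‖w‖) * ε := by
      intro ε hε
      obtain ⟨p, hp, h1, h2⟩ := happrox x ε hε
      have h0 := h p hp
      have heq : ⟪z, (x : X)⟫ - ⟪w, (T x : X)⟫
          = ⟪z, (x : X) - (p : X)⟫ - ⟪w, (T x : X) - (T p : X)⟫ := by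
        rw [inner_sub_right, inner_sub_right, h0]; ring
      rw [heq]
      calc ‖⟪z, (x : X) - (p : X)⟫ - ⟪w, (T x : X) - (T p : X)⟫‖
          ≤ ‖⟪z, (x : X) - (p : X)⟫‖ + ‖⟪w, (T x : X) - (T p : X)⟫‖ := norm_sub_le _ _
        _ ≤ ‖z‖ * ‖(x : X) - (p : X)‖ + ‖w‖ * ‖(T x : X) - (T p : X)‖ :=
            add_le_add (norm_inner_le_norm _ _) (norm_inner_le_norm _ _)
        _ ≤ ‖z‖ * ε + ‖w‖ * ε := by
            have e1 : ‖(x : X) - (p : X)‖ ≤ ε := by rw [norm_sub_rev]; exact h1.le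
            have e2 : ‖(T x : X) - (T p : X)‖ ≤ ε := by rw [norm_sub_rev]; exact h2.le
            have := norm_nonneg z; have := norm_nonneg w
            nlinarith [norm_nonneg ((x : X) - (p : X)), norm_nonneg ((T x : X) - (T p : X))]
        _ = (‖z‖ + ‖w‖) * ε := by ring
    have hz : ‖⟪z, (x : X)⟫ - ⟪w, (T x : X)⟫‖ ≤ 0 := by
      refine le_of_forall_pos_le_add fun ε hε => ?_
      have hb := key (ε / (‖z‖ + ‖w‖ + 1)) (by positivity)
      have h1 : (0:ℝ) < ‖z‖ + ‖w‖ + 1 := by positivity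
      have h2 : (‖z‖ + ‖w‖) * (ε / (‖z‖ + ‖w‖ + 1)) ≤ ε := by
        rw [mul_div_assoc']
        rw [div_le_iff₀ h1]
        nlinarith [norm_nonneg z, norm_nonneg w, hε.le]
      linarith
    exact sub_eq_zero.mp (norm_le_zero_iff.mp hz)
  have hSTform := adjoint_isFormalAdjoint hSTd (T := ST)
  have hSform := adjoint_isFormalAdjoint hSd (T := S)
  have hTform := adjoint_isFormalAdjoint hTd (T := T)
  -- the F-part of S is bounded
  set ℓ : F →L[ℂ] X :=
    ⟨S.toFun ∘ₗ Submodule.inclusion hFD,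
      (S.toFun ∘ₗ Submodule.inclusion hFD).continuous_of_finiteDimensional⟩ with hℓdef
  -- membership of y in D(S*)
  have hmemS : ∀ y : ST.adjoint.domain, (y : X) ∈ S.adjoint.domain := by
    intro y
    rw [S.mem_adjoint_domain_iff]
    set z : X := (ST.adjoint y : X) with hzdef
    apply AddMonoidHomClass.continuous_of_bound
      ((innerₛₗ ℂ ((y : X))).comp S.toFun)
      (‖z‖ * C * ‖πR‖ + ‖(y : X)‖ * ‖ℓ‖ * ‖πF‖)
    intro u
    have hbS : πF (u : X) ∈ S.domain := hFD (hπF (u : X))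
    have haS : πR (u : X) ∈ S.domain := by
      have h1 : πR (u : X) = (u : X) - πF (u : X) := eq_sub_of_add_eq (hπsum (u : X))
      rw [h1]; exact sub_mem u.2 hbS
    have haR : πR (u : X) ∈ R := hπR (u : X)
    have hsplit : (S u : X) = S ⟨πR (u : X), haS⟩ + S ⟨πF (u : X), hbS⟩ := by
      rw [← S.map_add]
      congr 1
      exact Subtype.ext (hπsum (u : X)).symm
    obtain ⟨xT, hxT1, hxT2⟩ := hCbound (πR (u : X)) haR
    have hxT1' : T xT ∈ S.domain := by rw [hxT1]; exact haS
    have hxST : (xT : X) ∈ ST.domain := (hdom _).mpr ⟨xT.2, hxT1'⟩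
    have hval : (ST ⟨(xT : X), hxST⟩ : X) = S ⟨πR (u : X), haS⟩ := by
      rw [happ ⟨(xT : X), hxST⟩ xT.2 hxT1']
      congr 1
      exact Subtype.ext hxT1
    have hterm1 : ⟪(y : X), (S ⟨πR (u : X), haS⟩ : X)⟫ = ⟪z, (xT : X)⟫ := by
      rw [← hval, hzdef]
      exact (hSTform y ⟨(xT : X), hxST⟩).symm
    have hterm2 : (S ⟨πF (u : X), hbS⟩ : X) = ℓ ⟨πF (u : X), hπF (u : X)⟩ := rfl
    have happly : ((innerₛₗ ℂ ((y : X))).comp S.toFun) u = ⟪(y : X), (S u : X)⟫ := rfl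
    rw [happly, hsplit, inner_add_right]
    have hb1 : ‖⟪(y : X), (S ⟨πR (u : X), haS⟩ : X)⟫‖ ≤ ‖z‖ * C * ‖πR‖ * ‖(u : X)‖ := by
      rw [hterm1]
      have i1 : ‖⟪z, (xT : X)⟫‖ ≤ ‖z‖ * ‖(xT : X)‖ := norm_inner_le_norm _ _
      have i2 : ‖(xT : X)‖ ≤ C * ‖πR (u : X)‖ := hxT2
      have i3 : ‖πR (u : X)‖ ≤ ‖πR‖ * ‖(u : X)‖ := πR.le_opNorm _
      calc ‖⟪z, (xT : X)⟫‖ ≤ ‖z‖ * ‖(xT : X)‖ := i1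
        _ ≤ ‖z‖ * (C * ‖πR (u : X)‖) := mul_le_mul_of_nonneg_left i2 (norm_nonneg z)
        _ ≤ ‖z‖ * (C * (‖πR‖ * ‖(u : X)‖)) := by
            refine mul_le_mul_of_nonneg_left ?_ (norm_nonneg z)
            exact mul_le_mul_of_nonneg_left i3 hC.le
        _ = ‖z‖ * C * ‖πR‖ * ‖(u : X)‖ := by ring
    have hb2 : ‖⟪(y : X), (S ⟨πF (u : X), hbS⟩ : X)⟫‖
        ≤ ‖(y : X)‖ * ‖ℓ‖ * ‖πF‖ * ‖(u : X)‖ := by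
      rw [hterm2]
      have i1 : ‖⟪(y : X), (ℓ ⟨πF (u : X), hπF (u : X)⟩ : X)⟫‖
          ≤ ‖(y : X)‖ * ‖ℓ ⟨πF (u : X), hπF (u : X)⟩‖ := norm_inner_le_norm _ _
      have i2 : ‖ℓ ⟨πF (u : X), hπF (u : X)⟩‖ ≤ ‖ℓ‖ * ‖πF (u : X)‖ := ℓ.le_opNorm _
      have i3 : ‖πF (u : X)‖ ≤ ‖πF‖ * ‖(u : X)‖ := πF.le_opNorm _
      calc ‖⟪(y : X), (ℓ ⟨πF (u : X), hπF (u : X)⟩ : X)⟫‖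
          ≤ ‖(y : X)‖ * ‖ℓ ⟨πF (u : X), hπF (u : X)⟩‖ := i1
        _ ≤ ‖(y : X)‖ * (‖ℓ‖ * ‖πF (u : X)‖) := mul_le_mul_of_nonneg_left i2 (norm_nonneg _)
        _ ≤ ‖(y : X)‖ * (‖ℓ‖ * (‖πF‖ * ‖(u : X)‖)) := by
            refine mul_le_mul_of_nonneg_left ?_ (norm_nonneg _)
            exact mul_le_mul_of_nonneg_left i3 (norm_nonneg ℓ)
        _ = ‖(y : X)‖ * ‖ℓ‖ * ‖πF‖ * ‖(u : X)‖ := by ring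
    have hnu : ‖u‖ = ‖(u : X)‖ := rfl
    calc ‖⟪(y : X), (S ⟨πR (u : X), haS⟩ : X)⟫ + ⟪(y : X), (S ⟨πF (u : X), hbS⟩ : X)⟫‖
        ≤ ‖⟪(y : X), (S ⟨πR (u : X), haS⟩ : X)⟫‖
          + ‖⟪(y : X), (S ⟨πF (u : X), hbS⟩ : X)⟫‖ := norm_add_le _ _
      _ ≤ ‖z‖ * C * ‖πR‖ * ‖(u : X)‖ + ‖(y : X)‖ * ‖ℓ‖ * ‖πF‖ * ‖(u : X)‖ := add_le_add hb1 hb2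
      _ = (‖z‖ * C * ‖πR‖ + ‖(y : X)‖ * ‖ℓ‖ * ‖πF‖) * ‖u‖ := by rw [hnu]; ring
  -- the key identity
  have hkey : ∀ y : ST.adjoint.domain, ∀ x : T.domain,
      ⟪(ST.adjoint y : X), (x : X)⟫ = ⟪(S.adjoint ⟨(y : X), hmemS y⟩ : X), (T x : X)⟫ := by
    intro y
    apply hext
    intro p hp
    obtain ⟨h, h'⟩ := (hdom (p : X)).mp hp
    have h'' : T p ∈ S.domain := h'
    have e1 : ⟪(S.adjoint ⟨(y : X), hmemS y⟩ : X), (T p : X)⟫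
        = ⟪(y : X), (S ⟨(T p : X), h''⟩ : X)⟫ :=
      hSform ⟨(y : X), hmemS y⟩ ⟨(T p : X), h''⟩
    have e2 : (ST ⟨(p : X), hp⟩ : X) = S ⟨(T p : X), h''⟩ := happ ⟨(p : X), hp⟩ p.2 h''
    have e3 : ⟪(ST.adjoint y : X), (p : X)⟫ = ⟪(y : X), (ST ⟨(p : X), hp⟩ : X)⟫ :=
      hSTform y ⟨(p : X), hp⟩
    rw [e3, e2, e1]
  have hmemT : ∀ y : ST.adjoint.domain,
      (S.adjoint ⟨(y : X), hmemS y⟩ : X) ∈ T.adjoint.domain := fun y =>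
    mem_adjoint_domain_of_exists _ ⟨(ST.adjoint y : X), hkey y⟩
  constructor
  · exact hSTd
  constructor
  · -- domain characterization
    intro y
    constructor
    · intro hy
      exact ⟨hmemS ⟨y, hy⟩, hmemT ⟨y, hy⟩⟩
    · rintro ⟨h, h'⟩
      apply mem_adjoint_domain_of_exists
      refine ⟨(T.adjoint ⟨(S.adjoint ⟨y, h⟩ : X), h'⟩ : X), fun x => ?_⟩
      obtain ⟨hx, hx'⟩ := (hdom (x : X)).mp x.2
      have hx'' : T ⟨(x : X), hx⟩ ∈ S.domain := hx'
      have e1 : (ST x : X) = S ⟨T ⟨(x : X), hx⟩, hx''⟩ := happ x hx hx''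
      have e2 : ⟪(y : X), (S ⟨T ⟨(x : X), hx⟩, hx''⟩ : X)⟫
          = ⟪(S.adjoint ⟨y, h⟩ : X), (T ⟨(x : X), hx⟩ : X)⟫ :=
        (hSform ⟨y, h⟩ ⟨T ⟨(x : X), hx⟩, hx''⟩).symm
      have e3 : ⟪(S.adjoint ⟨y, h⟩ : X), (T ⟨(x : X), hx⟩ : X)⟫
          = ⟪(T.adjoint ⟨(S.adjoint ⟨y, h⟩ : X), h'⟩ : X), (x : X)⟫ :=
        (hTform ⟨(S.adjoint ⟨y, h⟩ : X), h'⟩ ⟨(x : X), hx⟩).symm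
      rw [e1, e2, e3]
  · -- values
    intro y h h'
    have : T.adjoint ⟨(S.adjoint ⟨(y : X), h⟩ : X), h'⟩ = (ST.adjoint y : X) :=
      adjoint_apply_eq hTd _ fun x => hkey y x
    exact this.symm
end

section
/- Let T be a closed densely defined operator on a Hilbert space and S be T-bounded with relative bound < 1 such that S* is T*-bounded with relative bound < 1. Then S + T is closed and (S + T)* = S* + T*. -/
open LinearPMap Filter Topology Submodule

noncomputable section

namespace HessKatoAux

set_option linter.unusedSectionVars false
set_option maxHeartbeats 1000000

local notation "⟪" x ", " y "⟫" => @inner ℂ _ _ x y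









variable {E : Type*} [NormedAddCommGroup E] [InnerProductSpace ℂ E]


/-- norm of projection of w is at most norm of w -/
lemma norm_proj_le (K : Submodule ℂ E) [HasOrthogonalProjection K] (w : E) :
    ‖(orthogonalProjection K w : E)‖ ≤ ‖w‖ := by
  have := orthogonalProjection_norm_le K
  calc ‖(orthogonalProjection K w : E)‖ = ‖orthogonalProjection K w‖ := rfl
    _ ≤ ‖orthogonalProjection K‖ * ‖w‖ := (orthogonalProjection K).le_opNorm w
    _ ≤ 1 * ‖w‖ := by gcongr
    _ = ‖w‖ := one_mul _

/-- distance to the projection is minimal -/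
lemma norm_sub_proj_le (K : Submodule ℂ E) [HasOrthogonalProjection K] (w v : E)
    (hv : v ∈ K) : ‖w - orthogonalProjection K w‖ ≤ ‖w - v‖ := by
  rw [← Submodule.starProjection_apply, Submodule.starProjection_minimal]
  exact ciInf_le ⟨0, fun x ⟨y, hy⟩ => hy ▸ norm_nonneg _⟩ (⟨v, hv⟩ : K)

/-- key quantitative estimate: if subspaces are mutually close, projections are close. -/
lemma proj_dist {U V : Submodule ℂ E} [HasOrthogonalProjection U] [HasOrthogonalProjection V]
    {ε : ℝ} (hε : 0 ≤ ε)
    (hUV : ∀ u ∈ U, ∃ v ∈ V, ‖u - v‖ ≤ ε * ‖u‖)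
    (hVU : ∀ v ∈ V, ∃ u ∈ U, ‖v - u‖ ≤ ε * ‖v‖) (w : E) :
    ‖(orthogonalProjection U w : E) - orthogonalProjection V w‖ ≤ 2 * ε * ‖w‖ := by
  set p : E := (orthogonalProjection U w : E) with hp
  set z : E := w - p with hz
  -- first term : ‖p - P_V p‖ ≤ ε ‖w‖
  have h1 : ‖p - orthogonalProjection V p‖ ≤ ε * ‖w‖ := by
    obtain ⟨v, hvV, hv⟩ := hUV p (orthogonalProjection U w).2
    calc ‖p - orthogonalProjection V p‖ ≤ ‖p - v‖ := norm_sub_proj_le V p v hvV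
      _ ≤ ε * ‖p‖ := hv
      _ ≤ ε * ‖w‖ := by have := norm_proj_le U w; gcongr
  -- second term : ‖P_V z‖ ≤ ε ‖w‖ where z ⊥ U
  have hzU : z ∈ Uᗮ := Submodule.sub_starProjection_mem_orthogonal (K := U) w
  set q : E := (orthogonalProjection V z : E) with hq
  have h2 : ‖q‖ ≤ ε * ‖w‖ := by
    obtain ⟨u, huU, hu⟩ := hVU q (orthogonalProjection V z).2
    have hinner : ⟪q, z⟫ = (‖q‖ : ℂ) ^ 2 := by
      have horth : ⟪q, z - q⟫ = 0 := by
        rw [inner_eq_zero_symm]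
        exact Submodule.starProjection_inner_eq_zero (K := V) z q (orthogonalProjection V z).2
      have : ⟪q, z⟫ = ⟪q, q⟫ + ⟪q, z - q⟫ := by rw [← inner_add_right, add_sub_cancel]
      rw [this, horth, add_zero, inner_self_eq_norm_sq_to_K]
      norm_cast
    have hu0 : ⟪u, z⟫ = 0 := Submodule.inner_right_of_mem_orthogonal huU hzU
    have hqz : ⟪q, z⟫ = ⟪q - u, z⟫ := by rw [inner_sub_left, hu0, sub_zero]
    have hnz : ‖z‖ ≤ ‖w‖ := by
      exact (norm_sub_proj_le U w 0 (zero_mem U)).trans_eq (by rw [sub_zero])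
    have hbound : ‖q‖ ^ 2 ≤ ε * ‖q‖ * ‖z‖ := by
      have := norm_inner_le_norm (𝕜 := ℂ) (q - u) z
      have h3 : ‖⟪q, z⟫‖ ≤ ε * ‖q‖ * ‖z‖ := by
        rw [hqz]
        calc ‖⟪q - u, z⟫‖ ≤ ‖q - u‖ * ‖z‖ := norm_inner_le_norm _ _
          _ ≤ (ε * ‖q‖) * ‖z‖ := by gcongr
      calc ‖q‖ ^ 2 = ‖⟪q, z⟫‖ := by rw [hinner]; norm_num
        _ ≤ ε * ‖q‖ * ‖z‖ := h3
    rcases eq_or_ne q 0 with h | h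
    · rw [h, norm_zero]; positivity
    · have hq0 : 0 < ‖q‖ := norm_pos_iff.mpr h
      have : ‖q‖ ≤ ε * ‖z‖ := by nlinarith
      calc ‖q‖ ≤ ε * ‖z‖ := this
        _ ≤ ε * ‖w‖ := by gcongr
  -- combine : P_U w - P_V w = (p - P_V p) - P_V z
  have hsplit : (orthogonalProjection U w : E) - orthogonalProjection V w
      = (p - orthogonalProjection V p) - q := by
    have : (orthogonalProjection V w : E) = orthogonalProjection V p + q := by
      rw [hq, hz, _root_.map_sub]
      push_cast
      abel
    rw [this, ← hp]
    abel
  rw [hsplit]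
  calc ‖(p - orthogonalProjection V p) - q‖ ≤ ‖p - orthogonalProjection V p‖ + ‖q‖ :=
        norm_sub_le _ _
    _ ≤ ε * ‖w‖ + ε * ‖w‖ := add_le_add h1 h2
    _ = 2 * ε * ‖w‖ := by ring

/-- if U ≤ V and the projections are uniformly closer than 1, then U = V -/
lemma eq_of_le_of_proj_dist {U V : Submodule ℂ E} [HasOrthogonalProjection U]
    [HasOrthogonalProjection V] (hUV : U ≤ V) {c : ℝ} (hc : c < 1)
    (h : ∀ w, ‖(orthogonalProjection U w : E) - orthogonalProjection V w‖ ≤ c * ‖w‖) :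
    U = V := by
  refine le_antisymm hUV fun v hv => ?_
  set z : E := v - orthogonalProjection U v with hz
  have hzV : z ∈ V := V.sub_mem hv (hUV (orthogonalProjection U v).2)
  have hzU : z ∈ Uᗮ := Submodule.sub_starProjection_mem_orthogonal (K := U) v
  have hPV : (orthogonalProjection V z : E) = z :=
    congrArg _ (orthogonalProjection_mem_subspace_eq_self (⟨z, hzV⟩ : V))
  have hPU : (orthogonalProjection U z : E) = 0 := by
    rw [Submodule.orthogonalProjectionOnto_apply_of_mem_orthogonal hzU]; rfl
  have := h z
  rw [hPU, hPV, zero_sub, norm_neg] at this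
  have hzero : z = 0 := by
    by_contra h0
    have : (0:ℝ) < ‖z‖ := norm_pos_iff.mpr h0
    nlinarith
  have : v = (orthogonalProjection U v : E) := by
    have := sub_eq_zero.mp hzero.symm.symm
    rwa [hz, sub_eq_zero] at hzero
  rw [this]
  exact (orthogonalProjection U v).2

/-- projections onto orthogonal complements differ by the same amount -/
lemma proj_dist_orthogonal {U V : Submodule ℂ E} [HasOrthogonalProjection U]
    [HasOrthogonalProjection V] (w : E) :
    ‖(orthogonalProjection Uᗮ w : E) - orthogonalProjection Vᗮ w‖
      = ‖(orthogonalProjection U w : E) - orthogonalProjection V w‖ := by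
  have hval : ∀ (K : Submodule ℂ E) [HasOrthogonalProjection K] (u : E),
      (orthogonalProjection Kᗮ u : E) = u - orthogonalProjection K u :=
    fun K _ u => Submodule.starProjection_orthogonal_val (K := K) u
  rw [hval, hval]
  rw [show w - orthogonalProjection U w - (w - orthogonalProjection V w)
      = (orthogonalProjection V w : E) - orthogonalProjection U w by abel, norm_sub_rev]

lemma eq_orthogonalProjection_of_eq_submodule {K K' : Submodule ℂ E} [HasOrthogonalProjection K]
    [HasOrthogonalProjection K'] (h : K = K') (u : E) :
    (orthogonalProjection K u : E) = (orthogonalProjection K' u : E) := by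
  subst h
  rfl












variable {X : Type*} [NormedAddCommGroup X] [InnerProductSpace ℂ X] [CompleteSpace X]




/-- the identification of `X × X` with its `L²` version -/
def eL : WithLp 2 (X × X) ≃ₗ[ℂ] X × X := WithLp.linearEquiv 2 ℂ (X × X)

/-- the graph of a partial linear map inside the `L²` product -/
def Γ (A : X →ₗ.[ℂ] X) : Submodule ℂ (WithLp 2 (X × X)) :=
  A.graph.map ((eL (X := X)).symm : (X × X) →ₗ[ℂ] WithLp 2 (X × X))

lemma mem_Γ {A : X →ₗ.[ℂ] X} {z : WithLp 2 (X × X)} :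
    z ∈ Γ A ↔ (z.fst, z.snd) ∈ A.graph := by
  constructor
  · rintro ⟨p, hp, rfl⟩
    exact hp
  · intro h
    exact ⟨(z.fst, z.snd), h, rfl⟩

/-- the "symplectic rotation" `(x, y) ↦ (-y, x)` on `X × X` -/
def σmap : (X × X) ≃ₗ[ℂ] (X × X) :=
  LinearEquiv.ofLinear
    (LinearMap.prod (-(LinearMap.snd ℂ X X)) (LinearMap.fst ℂ X X))
    (LinearMap.prod (LinearMap.snd ℂ X X) (-(LinearMap.fst ℂ X X)))
    (by ext x <;> simp) (by ext x <;> simp)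

/-- the symplectic rotation on the `L²` product -/
def Jmap : WithLp 2 (X × X) ≃ₗ[ℂ] WithLp 2 (X × X) :=
  (eL (X := X)).trans (σmap.trans (eL (X := X)).symm)

lemma Jmap_fst (u : WithLp 2 (X × X)) : (Jmap u).fst = -u.snd := rfl

lemma Jmap_snd (u : WithLp 2 (X × X)) : (Jmap u).snd = u.fst := rfl

lemma norm_Jmap (u : WithLp 2 (X × X)) : ‖Jmap u‖ = ‖u‖ := by
  rw [← Real.sqrt_sq (norm_nonneg (Jmap u)), ← Real.sqrt_sq (norm_nonneg u)]
  congr 1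
  rw [WithLp.prod_norm_sq_eq_of_L2, WithLp.prod_norm_sq_eq_of_L2, Jmap_fst, Jmap_snd, norm_neg]
  ring

lemma norm_fst_le (u : WithLp 2 (X × X)) : ‖u.fst‖ ≤ ‖u‖ := by
  have h := WithLp.prod_norm_sq_eq_of_L2 u
  have h1 : ‖u.fst‖ ^ 2 ≤ ‖u‖ ^ 2 := by nlinarith [sq_nonneg ‖u.snd‖]
  nlinarith [norm_nonneg u, norm_nonneg u.fst]

lemma norm_snd_le (u : WithLp 2 (X × X)) : ‖u.snd‖ ≤ ‖u‖ := by
  have h := WithLp.prod_norm_sq_eq_of_L2 u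
  nlinarith [norm_nonneg u, norm_nonneg u.snd, sq_nonneg ‖u.fst‖]


/-- The graph of the adjoint is the orthogonal complement of the rotated graph. -/
lemma Γ_adjoint_eq {A : X →ₗ.[ℂ] X} (hA : Dense (A.domain : Set X)) :
    Γ (A†) = ((Γ A).map (Jmap.toLinearMap : WithLp 2 (X × X) →ₗ[ℂ] WithLp 2 (X × X)))ᗮ := by
  apply le_antisymm
  · intro z hz
    rw [Submodule.mem_orthogonal]
    rintro u ⟨w, hw, rfl⟩
    replace hw : (w.fst, w.snd) ∈ A.graph := mem_Γ.mp hw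
    rw [LinearPMap.mem_graph_iff] at hw
    rw [mem_Γ, LinearPMap.mem_graph_iff] at hz
    dsimp only at hw hz
    obtain ⟨x, hx1, hx2⟩ := hw
    obtain ⟨y, hy1, hy2⟩ := hz
    rw [WithLp.prod_inner_apply]
    rw [show ((Jmap.toLinearMap w).ofLp.1 : X) = -w.snd from rfl,
      show ((Jmap.toLinearMap w).ofLp.2 : X) = w.fst from rfl, ← hx1, ← hx2,
      show z.ofLp.1 = z.fst from rfl, show z.ofLp.2 = z.snd from rfl]
    have hfa : ⟪A† y, (x : X)⟫ = ⟪(y : X), A x⟫ := adjoint_isFormalAdjoint hA y x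
    rw [hy1, hy2] at hfa
    have hconj : ⟪(x : X), z.snd⟫ = ⟪A x, z.fst⟫ := by
      rw [← inner_conj_symm, hfa, inner_conj_symm]
    rw [inner_neg_left, hconj]
    ring
  · intro z hz
    rw [Submodule.mem_orthogonal] at hz
    have key : ∀ x : A.domain, ⟪z.fst, A x⟫ = ⟪z.snd, (x : X)⟫ := by
      intro x
      have := hz (Jmap.toLinearMap ((eL (X := X)).symm ((x : X), A x)))
        ⟨(eL (X := X)).symm ((x : X), A x), Submodule.mem_map_of_mem (A.mem_graph x), rfl⟩
      rw [WithLp.prod_inner_apply] at this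
      rw [show ((Jmap.toLinearMap ((eL (X := X)).symm ((x : X), A x))).ofLp.1 : X) = -(A x) from rfl,
        show ((Jmap.toLinearMap ((eL (X := X)).symm ((x : X), A x))).ofLp.2 : X) = (x : X) from rfl,
        show z.ofLp.1 = z.fst from rfl, show z.ofLp.2 = z.snd from rfl]
        at this
      rw [inner_neg_left] at this
      have h2 : ⟪(x : X), z.snd⟫ = ⟪A x, z.fst⟫ := by linear_combination this
      rw [← inner_conj_symm, ← h2, inner_conj_symm]
    have hz1 : z.fst ∈ (A†).domain :=
      mem_adjoint_domain_of_exists _ ⟨z.snd, fun x => (key x).symm⟩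
    have hz2 : A† ⟨z.fst, hz1⟩ = z.snd :=
      adjoint_apply_eq hA _ fun x => (key x).symm
    rw [mem_Γ, LinearPMap.mem_graph_iff]
    exact ⟨⟨z.fst, hz1⟩, rfl, hz2⟩

/-- transfer of closedness between the two pictures -/
lemma isClosed_Γ_iff (A : X →ₗ.[ℂ] X) :
    IsClosed ((Γ A : Set (WithLp 2 (X × X)))) ↔ A.IsClosed := by
  have hset : (Γ A : Set (WithLp 2 (X × X)))
      = (WithLp.prodContinuousLinearEquiv 2 ℂ X X).toHomeomorph ⁻¹'
        (A.graph : Set (X × X)) := by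
    ext z
    exact mem_Γ
  rw [hset, Homeomorph.isClosed_preimage]
  rfl














/-- A relatively bounded perturbation (bound < 1) of a closed operator is closed. -/
lemma isClosed_perturb {𝒜 : X →ₗ.[ℂ] X} (h𝒜 : 𝒜.IsClosed) (ℬ : 𝒜.domain →ₗ[ℂ] X)
    {a b : ℝ} (ha0 : 0 ≤ a) (ha : a < 1) (hb0 : 0 ≤ b)
    (hb : ∀ x : 𝒜.domain, ‖ℬ x‖ ≤ a * ‖𝒜 x‖ + b * ‖(x : X)‖) :
    (LinearPMap.mk 𝒜.domain (𝒜.toFun + ℬ)).IsClosed := by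
  rw [LinearPMap.IsClosed]
  apply IsSeqClosed.isClosed
  intro f p hmem htend
  choose x hx1 hx2 using fun n => (LinearPMap.mem_graph_iff _).mp (hmem n)
  -- notation
  set c : ℕ → X := fun n => 𝒜 (x n) with hc
  have key : ∀ u : 𝒜.domain, (1 - a) * ‖𝒜 u‖ ≤ ‖𝒜 u + ℬ u‖ + b * ‖(u : X)‖ := by
    intro u
    have h1 : ‖𝒜 u‖ ≤ ‖𝒜 u + ℬ u‖ + ‖ℬ u‖ := by
      calc ‖𝒜 u‖ = ‖(𝒜 u + ℬ u) - ℬ u‖ := by rw [add_sub_cancel_right]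
        _ ≤ ‖𝒜 u + ℬ u‖ + ‖ℬ u‖ := norm_sub_le _ _
    have h2 := hb u
    nlinarith
  -- the first components converge to p.1
  have h1 : Tendsto (fun n => ((x n : X))) atTop (𝓝 p.1) := by
    have := (continuous_fst.tendsto p).comp htend
    simpa only [Function.comp_def, ← hx1] using this
  -- the second components converge to p.2
  have h2 : Tendsto (fun n => 𝒜 (x n) + ℬ (x n)) atTop (𝓝 p.2) := by
    have := (continuous_snd.tendsto p).comp htend
    have heq : ∀ n, (f n).2 = 𝒜 (x n) + ℬ (x n) := fun n => (hx2 n).symm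
    simpa only [Function.comp_def, heq] using this
  -- Cauchyness of `c`
  have hcauchy : CauchySeq c := by
    have hu : CauchySeq (fun n => ((x n : X))) := h1.cauchySeq
    have hs : CauchySeq (fun n => 𝒜 (x n) + ℬ (x n)) := h2.cauchySeq
    rw [Metric.cauchySeq_iff] at hu hs ⊢
    intro ε hε
    have h1a : (0:ℝ) < 1 - a := by linarith
    obtain ⟨N₁, hN₁⟩ := hs ((1 - a) * ε / 2) (div_pos (mul_pos h1a hε) two_pos)
    obtain ⟨N₂, hN₂⟩ := hu ((1 - a) * ε / (2 * (b + 1))) (div_pos (mul_pos h1a hε) (by positivity))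
    refine ⟨max N₁ N₂, fun m hm n hn => ?_⟩
    have e1 := hN₁ m (le_of_max_le_left hm) n (le_of_max_le_left hn)
    have e2 := hN₂ m (le_of_max_le_right hm) n (le_of_max_le_right hn)
    rw [dist_eq_norm] at e1 e2 ⊢
    have hkey := key (x m - x n)
    have hm1 : 𝒜 (x m - x n) = 𝒜 (x m) - 𝒜 (x n) := LinearPMap.map_sub _ _ _
    have hm2 : ℬ (x m - x n) = ℬ (x m) - ℬ (x n) := _root_.map_sub _ _ _
    have hm3 : ((x m - x n : 𝒜.domain) : X) = (x m : X) - (x n : X) := rfl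
    rw [hm1, hm2, hm3] at hkey
    have hsub : 𝒜 (x m) - 𝒜 (x n) + (ℬ (x m) - ℬ (x n))
        = (𝒜 (x m) + ℬ (x m)) - (𝒜 (x n) + ℬ (x n)) := by abel
    rw [hsub] at hkey
    have hb1 : b * ‖(x m : X) - (x n : X)‖ ≤ b * ((1 - a) * ε / (2 * (b + 1))) := by
      have := e2.le
      gcongr
    have : (1 - a) * ‖c m - c n‖ < (1 - a) * ε := by
      have hbb : b * ((1 - a) * ε / (2 * (b + 1))) ≤ (1 - a) * ε / 2 := by
        have hrw : b * ((1 - a) * ε / (2 * (b + 1))) = ((1 - a) * ε) * (b / (2 * (b + 1))) := by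
          ring
        have hfr : b / (2 * (b + 1)) ≤ 1 / 2 := by
          rw [div_le_div_iff₀ (by positivity) two_pos]
          linarith
        rw [hrw]
        calc ((1 - a) * ε) * (b / (2 * (b + 1))) ≤ ((1 - a) * ε) * (1 / 2) := by
              have := (mul_pos h1a hε).le
              gcongr
          _ = (1 - a) * ε / 2 := by ring
      calc (1 - a) * ‖c m - c n‖
          ≤ ‖(𝒜 (x m) + ℬ (x m)) - (𝒜 (x n) + ℬ (x n))‖ + b * ‖(x m : X) - (x n : X)‖ := hkey
        _ < (1 - a) * ε / 2 + (1 - a) * ε / 2 := by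
            have := hb1.trans hbb
            exact add_lt_add_of_lt_of_le e1 this
        _ = (1 - a) * ε := by ring
    exact lt_of_mul_lt_mul_left this h1a.le
  -- limit of `c`
  obtain ⟨z, hz⟩ := cauchySeq_tendsto_of_complete hcauchy
  -- `(p.1, z)` is in the graph of `𝒜`
  have hgraph : (p.1, z) ∈ 𝒜.graph := by
    have hg : ∀ n, ((x n : X), c n) ∈ (𝒜.graph : Set (X × X)) := fun n => 𝒜.mem_graph (x n)
    have htt : Tendsto (fun n => ((x n : X), c n)) atTop (𝓝 (p.1, z)) := h1.prodMk_nhds hz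
    exact h𝒜.mem_of_tendsto htt (Eventually.of_forall hg)
  obtain ⟨x₀, hx01, hx02⟩ := (LinearPMap.mem_graph_iff _).mp hgraph
  dsimp only at hx01 hx02
  -- `ℬ (x n)` converges to `ℬ x₀`
  have hB : Tendsto (fun n => ℬ (x n)) atTop (𝓝 (ℬ x₀)) := by
    rw [tendsto_iff_norm_sub_tendsto_zero]
    have hbound : ∀ n, ‖ℬ (x n) - ℬ x₀‖ ≤ a * ‖c n - z‖ + b * ‖((x n : X)) - p.1‖ := by
      intro n
      have := hb (x n - x₀)
      rw [LinearPMap.map_sub, _root_.map_sub] at this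
      have h3 : ((x n - x₀ : 𝒜.domain) : X) = (x n : X) - (x₀ : X) := rfl
      rw [h3, hx01, hx02] at this
      exact this
    have hlim : Tendsto (fun n => a * ‖c n - z‖ + b * ‖((x n : X)) - p.1‖) atTop (𝓝 0) := by
      have l1 : Tendsto (fun n => ‖c n - z‖) atTop (𝓝 0) :=
        tendsto_iff_norm_sub_tendsto_zero.mp hz
      have l2 : Tendsto (fun n => ‖((x n : X)) - p.1‖) atTop (𝓝 0) :=
        tendsto_iff_norm_sub_tendsto_zero.mp h1
      have := (l1.const_mul a).add (l2.const_mul b)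
      simpa using this
    exact squeeze_zero (fun n => norm_nonneg _) hbound hlim
  -- conclude
  have hp2 : p.2 = z + ℬ x₀ := tendsto_nhds_unique h2 (hz.add hB)
  rw [SetLike.mem_coe, LinearPMap.mem_graph_iff]
  refine ⟨x₀, hx01, ?_⟩
  show 𝒜.toFun x₀ + ℬ x₀ = p.2
  rw [hp2, 𝒜.toFun_eq_coe, hx02]


lemma Γ_injective {A B : X →ₗ.[ℂ] X} (h : Γ A = Γ B) : A = B := by
  apply LinearPMap.eq_of_eq_graph
  apply Submodule.map_injective_of_injective
    ((eL (X := X)).symm.injective : Function.Injective ((eL (X := X)).symm : (X × X) →ₗ[ℂ] WithLp 2 (X × X)))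
  exact h

/-- the pencil of operators `𝒯 + t𝒮` -/
def famA {D : Submodule ℂ X} (𝒯 𝒮 : D →ₗ[ℂ] X) (t : ℝ) : X →ₗ.[ℂ] X :=
  LinearPMap.mk D (𝒯 + (t : ℂ) • 𝒮)

lemma famA_zero {D : Submodule ℂ X} (𝒯 𝒮 : D →ₗ[ℂ] X) :
    famA 𝒯 𝒮 0 = LinearPMap.mk D 𝒯 := by
  unfold famA
  norm_num

lemma norm_ofReal_smul (r : ℝ) (x : X) : ‖(r : ℂ) • x‖ = |r| * ‖x‖ := by
  rw [norm_smul]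
  congr 1
  exact Complex.norm_real r

/-- uniform relative bound along the pencil -/
lemma relbound_family {D : Submodule ℂ X} (𝒯 𝒮 : D →ₗ[ℂ] X) {a b : ℝ}
    (ha0 : 0 ≤ a) (ha : a < 1) (hb0 : 0 ≤ b)
    (hab : ∀ x : D, ‖𝒮 x‖ ≤ a * ‖𝒯 x‖ + b * ‖(x : X)‖) {s : ℝ} (hs0 : 0 ≤ s) (hs1 : s ≤ 1) :
    ∀ x : D, ‖𝒮 x‖ ≤ ((a + b) / (1 - a)) * (‖(𝒯 + (s : ℂ) • 𝒮) x‖ + ‖(x : X)‖) := by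
  intro x
  have h1a : (0 : ℝ) < 1 - a := by linarith
  have h1 : ‖𝒯 x‖ ≤ ‖(𝒯 + (s : ℂ) • 𝒮) x‖ + s * ‖𝒮 x‖ := by
    have he : 𝒯 x = (𝒯 + (s : ℂ) • 𝒮) x - (s : ℂ) • 𝒮 x := by
      simp [LinearMap.add_apply]
    calc ‖𝒯 x‖ = ‖(𝒯 + (s : ℂ) • 𝒮) x - (s : ℂ) • 𝒮 x‖ := by rw [← he]
      _ ≤ ‖(𝒯 + (s : ℂ) • 𝒮) x‖ + ‖(s : ℂ) • 𝒮 x‖ := norm_sub_le _ _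
      _ = ‖(𝒯 + (s : ℂ) • 𝒮) x‖ + s * ‖𝒮 x‖ := by
          rw [norm_ofReal_smul, abs_of_nonneg hs0]
  have h2 := hab x
  rw [div_mul_eq_mul_div, le_div_iff₀ h1a]
  have h3 : a * ‖𝒯 x‖ ≤ a * (‖(𝒯 + (s : ℂ) • 𝒮) x‖ + s * ‖𝒮 x‖) :=
    mul_le_mul_of_nonneg_left h1 ha0
  have h5 : a * (s * ‖𝒮 x‖) ≤ a * ‖𝒮 x‖ := by
    have hq := norm_nonneg (𝒮 x)
    have : s * ‖𝒮 x‖ ≤ ‖𝒮 x‖ := by nlinarith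
    exact mul_le_mul_of_nonneg_left this ha0
  nlinarith [norm_nonneg (𝒮 x), norm_nonneg (𝒯 x), norm_nonneg ((𝒯 + (s : ℂ) • 𝒮) x),
    norm_nonneg (x : X), mul_nonneg ha0 (norm_nonneg (x : X)),
    mul_nonneg hb0 (norm_nonneg ((𝒯 + (s : ℂ) • 𝒮) x))]

lemma norm_fst_le' (u : WithLp 2 (X × X)) : ‖u.fst‖ ≤ ‖u‖ := by
  have h := WithLp.prod_norm_sq_eq_of_L2 u
  nlinarith [norm_nonneg u, norm_nonneg u.fst, sq_nonneg ‖u.snd‖]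

lemma norm_snd_le' (u : WithLp 2 (X × X)) : ‖u.snd‖ ≤ ‖u‖ := by
  have h := WithLp.prod_norm_sq_eq_of_L2 u
  nlinarith [norm_nonneg u, norm_nonneg u.snd, sq_nonneg ‖u.fst‖]

/-- moving along the pencil moves the graph slowly in the gap sense -/
lemma delta_est {D : Submodule ℂ X} (𝒯 𝒮 : D →ₗ[ℂ] X) {K : ℝ} (hK0 : 0 ≤ K) (s t : ℝ)
    (hKs : ∀ x : D, ‖𝒮 x‖ ≤ K * (‖(𝒯 + (s : ℂ) • 𝒮) x‖ + ‖(x : X)‖)) :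
    ∀ u ∈ Γ (famA 𝒯 𝒮 s), ∃ v ∈ Γ (famA 𝒯 𝒮 t), ‖u - v‖ ≤ 2 * K * |t - s| * ‖u‖ := by
  intro u hu
  obtain ⟨x, hx1, hx2⟩ := (LinearPMap.mem_graph_iff _).mp (mem_Γ.mp hu)
  dsimp only at hx1 hx2
  have hx2' : (𝒯 + (s : ℂ) • 𝒮) x = u.snd := hx2
  refine ⟨(eL (X := X)).symm ((x : X), (𝒯 + (t : ℂ) • 𝒮) x),
    Submodule.mem_map_of_mem
      (?_ : ((x : X), (𝒯 + (t : ℂ) • 𝒮) x) ∈ (famA 𝒯 𝒮 t).graph), ?_⟩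
  · exact LinearPMap.mem_graph (famA 𝒯 𝒮 t) ⟨(x : X), x.2⟩
  have hu' : u = (eL (X := X)).symm ((x : X), (𝒯 + (s : ℂ) • 𝒮) x) := by
    rw [hx1, hx2']
    rfl
  have hsub : u - (eL (X := X)).symm ((x : X), (𝒯 + (t : ℂ) • 𝒮) x)
      = (eL (X := X)).symm (0, ((s : ℂ) - (t : ℂ)) • 𝒮 x) := by
    rw [hu', ← _root_.map_sub]
    congr 1
    refine Prod.ext (by simp) ?_
    show (𝒯 + (s : ℂ) • 𝒮) x - (𝒯 + (t : ℂ) • 𝒮) x = ((s : ℂ) - (t : ℂ)) • 𝒮 x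
    change 𝒯 x + (s : ℂ) • 𝒮 x - (𝒯 x + (t : ℂ) • 𝒮 x) = ((s : ℂ) - (t : ℂ)) • 𝒮 x
    rw [sub_smul]
    abel
  rw [hsub]
  have hfst : ((eL (X := X)).symm (0, ((s : ℂ) - (t : ℂ)) • 𝒮 x) :
      WithLp 2 (X × X)).fst = (0 : X) := rfl
  have hsnd : ((eL (X := X)).symm (0, ((s : ℂ) - (t : ℂ)) • 𝒮 x) :
      WithLp 2 (X × X)).snd = ((s : ℂ) - (t : ℂ)) • 𝒮 x := rfl
  have hnorm : ‖(eL (X := X)).symm (0, ((s : ℂ) - (t : ℂ)) • 𝒮 x)‖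
      = |s - t| * ‖𝒮 x‖ := by
    have h2 := WithLp.prod_norm_sq_eq_of_L2
      ((eL (X := X)).symm (0, ((s : ℂ) - (t : ℂ)) • 𝒮 x))
    rw [hfst, hsnd] at h2
    have hsm : ‖((s : ℂ) - (t : ℂ)) • 𝒮 x‖ = |s - t| * ‖𝒮 x‖ := by
      rw [show ((s : ℂ) - (t : ℂ)) = ((s - t : ℝ) : ℂ) by push_cast; ring, norm_ofReal_smul]
    rw [hsm] at h2
    rw [← Real.sqrt_sq (norm_nonneg _), h2, norm_zero]
    rw [show (0:ℝ) ^ 2 + (|s - t| * ‖𝒮 x‖) ^ 2 = (|s - t| * ‖𝒮 x‖) ^ 2 by ring]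
    exact Real.sqrt_sq (by positivity)
  rw [hnorm]
  have hb := hKs x
  have h1 : ‖(𝒯 + (s : ℂ) • 𝒮) x‖ ≤ ‖u‖ := by
    rw [hx2']
    exact norm_snd_le' u
  have h2 : ‖(x : X)‖ ≤ ‖u‖ := by
    rw [hx1]
    exact norm_fst_le' u
  have habs : |s - t| = |t - s| := abs_sub_comm s t
  calc |s - t| * ‖𝒮 x‖ ≤ |s - t| * (K * (‖(𝒯 + (s : ℂ) • 𝒮) x‖ + ‖(x : X)‖)) := by
        have := abs_nonneg (s - t); gcongr
    _ ≤ |s - t| * (K * (‖u‖ + ‖u‖)) := by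
        have := abs_nonneg (s - t); gcongr
    _ = 2 * K * |t - s| * ‖u‖ := by rw [habs]; ring



/-- `Jmap` as a linear isometry equivalence -/
def Jiso {X : Type*} [NormedAddCommGroup X] [InnerProductSpace ℂ X] [CompleteSpace X] :
    WithLp 2 (X × X) ≃ₗᵢ[ℂ] WithLp 2 (X × X) := ⟨Jmap, norm_Jmap⟩

variable {X : Type*} [NormedAddCommGroup X] [InnerProductSpace ℂ X] [CompleteSpace X]

lemma isClosed_map_J {U : Submodule ℂ (WithLp 2 (X × X))} (hU : IsClosed (U : Set (WithLp 2 (X × X)))) :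
    IsClosed ((U.map (Jmap.toLinearMap : WithLp 2 (X × X) →ₗ[ℂ] WithLp 2 (X × X)) :
      Submodule ℂ (WithLp 2 (X × X))) : Set (WithLp 2 (X × X))) := by
  have h1 : ((U.map (Jmap.toLinearMap : WithLp 2 (X × X) →ₗ[ℂ] WithLp 2 (X × X)) :
      Submodule ℂ (WithLp 2 (X × X))) : Set (WithLp 2 (X × X)))
      = (Jiso (X := X)).toHomeomorph '' (U : Set (WithLp 2 (X × X))) := by
    ext z
    simp only [Submodule.map_coe]
    rfl
  rw [h1]
  exact (Jiso (X := X)).toHomeomorph.isClosedMap _ hU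

lemma delta_map {U V : Submodule ℂ (WithLp 2 (X × X))} {ε : ℝ}
    (h : ∀ u ∈ U, ∃ v ∈ V, ‖u - v‖ ≤ ε * ‖u‖) :
    ∀ u ∈ U.map (Jmap.toLinearMap : WithLp 2 (X × X) →ₗ[ℂ] WithLp 2 (X × X)),
      ∃ v ∈ V.map (Jmap.toLinearMap : WithLp 2 (X × X) →ₗ[ℂ] WithLp 2 (X × X)),
        ‖u - v‖ ≤ ε * ‖u‖ := by
  rintro u ⟨u₀, hu₀, rfl⟩
  obtain ⟨v₀, hv₀, hv⟩ := h u₀ hu₀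
  refine ⟨Jmap.toLinearMap v₀, Submodule.mem_map_of_mem hv₀, ?_⟩
  have h1 : (Jmap.toLinearMap u₀ : WithLp 2 (X × X)) - Jmap.toLinearMap v₀
      = Jmap.toLinearMap (u₀ - v₀) := (_root_.map_sub _ _ _).symm
  rw [h1]
  have h2 : ‖(Jmap.toLinearMap (u₀ - v₀) : WithLp 2 (X × X))‖ = ‖u₀ - v₀‖ := norm_Jmap _
  have h3 : ‖(Jmap.toLinearMap u₀ : WithLp 2 (X × X))‖ = ‖u₀‖ := norm_Jmap _
  rw [h2, h3]
  exact hv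

end HessKatoAux

section Main

open HessKatoAux

local notation "⟪" x ", " y "⟫" => @inner ℂ _ _ x y



open LinearPMap

/-- Hess–Kato. Let `T` be closed and densely defined, `S` be `T`-bounded
with relative bound `< 1` such that `S*` is `T*`-bounded with relative bound `< 1`. Then
`S + T` is closed and `(S + T)* = S* + T*`. -/
theorem hess_kato_adjoint_of_sum
    {X : Type*} [NormedAddCommGroup X] [InnerProductSpace ℂ X] [CompleteSpace X]
    (T S : X →ₗ.[ℂ] X) (hT : T.IsClosed) (hTd : Dense (T.domain : Set X))
    (hdom : T.domain ≤ S.domain)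
    (hbound : ∃ a b : ℝ, a < 1 ∧
      ∀ x : T.domain, ‖S ⟨(x : X), hdom x.2⟩‖ ≤ a * ‖T x‖ + b * ‖(x : X)‖)
    (hdom' : T.adjoint.domain ≤ S.adjoint.domain)
    (hbound' : ∃ a' b' : ℝ, a' < 1 ∧
      ∀ y : T.adjoint.domain,
        ‖S.adjoint ⟨(y : X), hdom' y.2⟩‖ ≤ a' * ‖T.adjoint y‖ + b' * ‖(y : X)‖) :
    (S + T).IsClosed ∧ (S + T).adjoint = S.adjoint + T.adjoint := by
  classical
  have hSd : Dense (S.domain : Set X) := hTd.mono hdom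
  obtain ⟨a₀, b₀, ha₀, hab₀⟩ := hbound
  obtain ⟨a₀', b₀', ha₀', hab₀'⟩ := hbound'
  set a : ℝ := max a₀ 0 with ha_def
  set b : ℝ := max b₀ 0 with hb_def
  set a' : ℝ := max a₀' 0 with ha'_def
  set b' : ℝ := max b₀' 0 with hb'_def
  have ha0 : 0 ≤ a := le_max_right _ _
  have ha1 : a < 1 := max_lt ha₀ one_pos
  have hb0 : 0 ≤ b := le_max_right _ _
  have ha0' : 0 ≤ a' := le_max_right _ _
  have ha1' : a' < 1 := max_lt ha₀' one_pos
  have hb0' : 0 ≤ b' := le_max_right _ _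
  -- the perturbing operators as linear maps on the domains of `T` and `T†`
  set 𝒮 : T.domain →ₗ[ℂ] X := S.toFun.comp (Submodule.inclusion hdom) with h𝒮_def
  set 𝒮' : T.adjoint.domain →ₗ[ℂ] X := S.adjoint.toFun.comp (Submodule.inclusion hdom')
    with h𝒮'_def
  have h𝒮app : ∀ x : T.domain, 𝒮 x = S ⟨(x : X), hdom x.2⟩ := fun _ => rfl
  have h𝒮'app : ∀ y : T.adjoint.domain, 𝒮' y = S.adjoint ⟨(y : X), hdom' y.2⟩ := fun _ => rfl
  have hab : ∀ x : T.domain, ‖𝒮 x‖ ≤ a * ‖T.toFun x‖ + b * ‖(x : X)‖ := by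
    intro x
    rw [h𝒮app]
    calc ‖S ⟨(x : X), hdom x.2⟩‖ ≤ a₀ * ‖T x‖ + b₀ * ‖(x : X)‖ := hab₀ x
      _ ≤ a * ‖T x‖ + b * ‖(x : X)‖ :=
          add_le_add (mul_le_mul_of_nonneg_right (le_max_left _ _) (norm_nonneg _))
            (mul_le_mul_of_nonneg_right (le_max_left _ _) (norm_nonneg _))
      _ = a * ‖T.toFun x‖ + b * ‖(x : X)‖ := rfl
  have hab' : ∀ y : T.adjoint.domain, ‖𝒮' y‖ ≤ a' * ‖T.adjoint.toFun y‖ + b' * ‖(y : X)‖ := by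
    intro y
    rw [h𝒮'app]
    calc ‖S.adjoint ⟨(y : X), hdom' y.2⟩‖ ≤ a₀' * ‖T.adjoint y‖ + b₀' * ‖(y : X)‖ := hab₀' y
      _ ≤ a' * ‖T.adjoint y‖ + b' * ‖(y : X)‖ :=
          add_le_add (mul_le_mul_of_nonneg_right (le_max_left _ _) (norm_nonneg _))
            (mul_le_mul_of_nonneg_right (le_max_left _ _) (norm_nonneg _))
      _ = a' * ‖T.adjoint.toFun y‖ + b' * ‖(y : X)‖ := rfl
  -- the adjoint of `T` is closed
  have hTad : Γ (T.adjoint) = ((Γ T).map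
      (Jmap.toLinearMap : WithLp 2 (X × X) →ₗ[ℂ] WithLp 2 (X × X)))ᗮ := Γ_adjoint_eq hTd
  have hT'c : (T.adjoint).IsClosed := by
    rw [← isClosed_Γ_iff, hTad]
    exact Submodule.isClosed_orthogonal _
  -- closedness of both pencils
  have hAc : ∀ t : ℝ, 0 ≤ t → t ≤ 1 → (famA T.toFun 𝒮 t).IsClosed := by
    intro t ht0 ht1
    refine isClosed_perturb hT ((t : ℂ) • 𝒮) ha0 ha1 hb0 ?_
    intro x
    rw [LinearMap.smul_apply, norm_ofReal_smul, abs_of_nonneg ht0]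
    calc t * ‖𝒮 x‖ ≤ 1 * ‖𝒮 x‖ := mul_le_mul_of_nonneg_right ht1 (norm_nonneg _)
      _ = ‖𝒮 x‖ := one_mul _
      _ ≤ a * ‖T.toFun x‖ + b * ‖(x : X)‖ := hab x
  have hBc : ∀ t : ℝ, 0 ≤ t → t ≤ 1 → (famA T.adjoint.toFun 𝒮' t).IsClosed := by
    intro t ht0 ht1
    refine isClosed_perturb hT'c ((t : ℂ) • 𝒮') ha0' ha1' hb0' ?_
    intro y
    rw [LinearMap.smul_apply, norm_ofReal_smul, abs_of_nonneg ht0]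
    calc t * ‖𝒮' y‖ ≤ 1 * ‖𝒮' y‖ := mul_le_mul_of_nonneg_right ht1 (norm_nonneg _)
      _ = ‖𝒮' y‖ := one_mul _
      _ ≤ a' * ‖T.adjoint.toFun y‖ + b' * ‖(y : X)‖ := hab' y
  -- the uniform pencil constants
  set K : ℝ := (a + b) / (1 - a) with hK_def
  set K' : ℝ := (a' + b') / (1 - a') with hK'_def
  have hK0 : 0 ≤ K := div_nonneg (by linarith) (by linarith)
  have hK0' : 0 ≤ K' := div_nonneg (by linarith) (by linarith)
  have hKs : ∀ s : ℝ, 0 ≤ s → s ≤ 1 →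
      ∀ x : T.domain, ‖𝒮 x‖ ≤ K * (‖(T.toFun + (s : ℂ) • 𝒮) x‖ + ‖(x : X)‖) :=
    fun s h0 h1 => relbound_family _ _ ha0 ha1 hb0 hab h0 h1
  have hKs' : ∀ s : ℝ, 0 ≤ s → s ≤ 1 →
      ∀ y : T.adjoint.domain, ‖𝒮' y‖ ≤ K' * (‖(T.adjoint.toFun + (s : ℂ) • 𝒮') y‖ + ‖(y : X)‖) :=
    fun s h0 h1 => relbound_family _ _ ha0' ha1' hb0' hab' h0 h1
  -- formal adjointness along the pencil
  have hsub : ∀ t : ℝ, Γ (famA T.adjoint.toFun 𝒮' t)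
      ≤ ((Γ (famA T.toFun 𝒮 t)).map
          (Jmap.toLinearMap : WithLp 2 (X × X) →ₗ[ℂ] WithLp 2 (X × X)))ᗮ := by
    intro t
    have hfa : (famA T.toFun 𝒮 t).IsFormalAdjoint (famA T.adjoint.toFun 𝒮' t) := by
      intro u v
      show ⟪T.toFun u + (t : ℂ) • 𝒮 u, (v : X)⟫ = ⟪(u : X), T.adjoint.toFun v + (t : ℂ) • 𝒮' v⟫
      rw [inner_add_left, inner_add_right,
        inner_smul_left, inner_smul_right]
      have h1 : ⟪T.toFun u, (v : X)⟫ = ⟪(u : X), T.adjoint.toFun v⟫ :=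
        (adjoint_isFormalAdjoint hTd).symm u v
      have h2 : ⟪𝒮 u, (v : X)⟫ = ⟪(u : X), 𝒮' v⟫ :=
        (adjoint_isFormalAdjoint hSd).symm ⟨(u : X), hdom u.2⟩ ⟨(v : X), hdom' v.2⟩
      rw [h1, h2, Complex.conj_ofReal]
    have hle : famA T.adjoint.toFun 𝒮' t ≤ (famA T.toFun 𝒮 t).adjoint :=
      IsFormalAdjoint.le_adjoint
        (show Dense ((famA T.toFun 𝒮 t).domain : Set X) from hTd) hfa
    calc Γ (famA T.adjoint.toFun 𝒮' t) ≤ Γ ((famA T.toFun 𝒮 t).adjoint) :=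
          Submodule.map_mono (le_graph_of_le hle)
      _ = _ := Γ_adjoint_eq hTd
  -- choose the number of steps
  obtain ⟨n, hn⟩ := exists_nat_gt (4 * (K + K'))
  have hnpos : 0 < (n : ℝ) := lt_of_le_of_lt (by positivity) hn
  -- the key induction
  have claim : ∀ k : ℕ, k ≤ n → Γ (famA T.adjoint.toFun 𝒮' ((k : ℝ) / n))
      = ((Γ (famA T.toFun 𝒮 ((k : ℝ) / n))).map
          (Jmap.toLinearMap : WithLp 2 (X × X) →ₗ[ℂ] WithLp 2 (X × X)))ᗮ := by
    intro k
    induction k with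
    | zero =>
      intro _
      rw [show ((0 : ℕ) : ℝ) / n = 0 by simp, famA_zero, famA_zero]
      rw [show (LinearPMap.mk T.adjoint.domain T.adjoint.toFun) = T.adjoint from rfl,
        show (LinearPMap.mk T.domain T.toFun) = T from rfl]
      exact hTad
    | succ k ih =>
      intro hk1
      have hk : k ≤ n := Nat.le_of_succ_le hk1
      have IH := ih hk
      set s : ℝ := (k : ℝ) / n with hs_def
      set t : ℝ := ((k + 1 : ℕ) : ℝ) / n with ht_def
      have hs0 : 0 ≤ s := by positivity
      have hs1 : s ≤ 1 := by
        rw [hs_def, div_le_one hnpos]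
        exact_mod_cast hk
      have ht0 : 0 ≤ t := by positivity
      have ht1 : t ≤ 1 := by
        rw [ht_def, div_le_one hnpos]
        exact_mod_cast hk1
      have hts : t - s = 1 / n := by
        rw [hs_def, ht_def]
        push_cast
        field_simp
        ring
      have habs1 : |t - s| = 1 / n := by rw [hts]; exact abs_of_nonneg (by positivity)
      have habs2 : |s - t| = 1 / n := by rw [abs_sub_comm]; exact habs1
      -- closedness instances
      haveI iU0 : HasOrthogonalProjection (Γ (famA T.adjoint.toFun 𝒮' s)) := by
        haveI := ((isClosed_Γ_iff _).mpr (hBc s hs0 hs1)).completeSpace_coe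
        infer_instance
      haveI iU1 : HasOrthogonalProjection (Γ (famA T.adjoint.toFun 𝒮' t)) := by
        haveI := ((isClosed_Γ_iff _).mpr (hBc t ht0 ht1)).completeSpace_coe
        infer_instance
      haveI iW0 : HasOrthogonalProjection ((Γ (famA T.toFun 𝒮 s)).map
          (Jmap.toLinearMap : WithLp 2 (X × X) →ₗ[ℂ] WithLp 2 (X × X))) := by
        haveI := (isClosed_map_J ((isClosed_Γ_iff _).mpr (hAc s hs0 hs1))).completeSpace_coe
        infer_instance
      haveI iW1 : HasOrthogonalProjection ((Γ (famA T.toFun 𝒮 t)).map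
          (Jmap.toLinearMap : WithLp 2 (X × X) →ₗ[ℂ] WithLp 2 (X × X))) := by
        haveI := (isClosed_map_J ((isClosed_Γ_iff _).mpr (hAc t ht0 ht1))).completeSpace_coe
        infer_instance
      -- gap estimates for the primed pencil
      have dU01 : ∀ u ∈ Γ (famA T.adjoint.toFun 𝒮' s), ∃ v ∈ Γ (famA T.adjoint.toFun 𝒮' t),
          ‖u - v‖ ≤ (2 * K' * (1 / n)) * ‖u‖ := by
        intro u hu
        obtain ⟨v, hv, hnorm⟩ := delta_est T.adjoint.toFun 𝒮' hK0' s t (hKs' s hs0 hs1) u hu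
        exact ⟨v, hv, by rwa [habs1] at hnorm⟩
      have dU10 : ∀ u ∈ Γ (famA T.adjoint.toFun 𝒮' t), ∃ v ∈ Γ (famA T.adjoint.toFun 𝒮' s),
          ‖u - v‖ ≤ (2 * K' * (1 / n)) * ‖u‖ := by
        intro u hu
        obtain ⟨v, hv, hnorm⟩ := delta_est T.adjoint.toFun 𝒮' hK0' t s (hKs' t ht0 ht1) u hu
        exact ⟨v, hv, by rwa [habs2] at hnorm⟩
      -- gap estimates for the unprimed pencil (mapped by J)
      have dW01 : ∀ u ∈ (Γ (famA T.toFun 𝒮 s)).map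
            (Jmap.toLinearMap : WithLp 2 (X × X) →ₗ[ℂ] WithLp 2 (X × X)),
          ∃ v ∈ (Γ (famA T.toFun 𝒮 t)).map
            (Jmap.toLinearMap : WithLp 2 (X × X) →ₗ[ℂ] WithLp 2 (X × X)),
          ‖u - v‖ ≤ (2 * K * (1 / n)) * ‖u‖ := by
        apply delta_map
        intro u hu
        obtain ⟨v, hv, hnorm⟩ := delta_est T.toFun 𝒮 hK0 s t (hKs s hs0 hs1) u hu
        exact ⟨v, hv, by rwa [habs1] at hnorm⟩
      have dW10 : ∀ u ∈ (Γ (famA T.toFun 𝒮 t)).map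
            (Jmap.toLinearMap : WithLp 2 (X × X) →ₗ[ℂ] WithLp 2 (X × X)),
          ∃ v ∈ (Γ (famA T.toFun 𝒮 s)).map
            (Jmap.toLinearMap : WithLp 2 (X × X) →ₗ[ℂ] WithLp 2 (X × X)),
          ‖u - v‖ ≤ (2 * K * (1 / n)) * ‖u‖ := by
        apply delta_map
        intro u hu
        obtain ⟨v, hv, hnorm⟩ := delta_est T.toFun 𝒮 hK0 t s (hKs t ht0 ht1) u hu
        exact ⟨v, hv, by rwa [habs2] at hnorm⟩
      -- projection estimates
      have hεK' : (0 : ℝ) ≤ 2 * K' * (1 / n) := by positivity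
      have hεK : (0 : ℝ) ≤ 2 * K * (1 / n) := by positivity
      have pU : ∀ w, ‖(orthogonalProjection (Γ (famA T.adjoint.toFun 𝒮' t)) w : WithLp 2 (X × X))
          - orthogonalProjection (Γ (famA T.adjoint.toFun 𝒮' s)) w‖
          ≤ 2 * (2 * K' * (1 / n)) * ‖w‖ :=
        fun w => proj_dist hεK' dU10 dU01 w
      have pW : ∀ w, ‖(orthogonalProjection ((Γ (famA T.toFun 𝒮 s)).map
            (Jmap.toLinearMap : WithLp 2 (X × X) →ₗ[ℂ] WithLp 2 (X × X)))ᗮ w : WithLp 2 (X × X))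
          - orthogonalProjection ((Γ (famA T.toFun 𝒮 t)).map
            (Jmap.toLinearMap : WithLp 2 (X × X) →ₗ[ℂ] WithLp 2 (X × X)))ᗮ w‖
          ≤ 2 * (2 * K * (1 / n)) * ‖w‖ := by
        intro w
        rw [proj_dist_orthogonal]
        exact proj_dist hεK dW01 dW10 w
      -- conclude by the rigidity lemma
      refine (eq_of_le_of_proj_dist (hsub t)
        (c := 2 * (2 * K' * (1 / n)) + 2 * (2 * K * (1 / n))) ?_ ?_)
      · have heq : 2 * (2 * K' * (1 / n)) + 2 * (2 * K * (1 / n)) = (4 * (K + K')) / n := by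
          ring
        rw [heq, div_lt_one hnpos]
        exact hn
      · intro w
        calc ‖(orthogonalProjection (Γ (famA T.adjoint.toFun 𝒮' t)) w : WithLp 2 (X × X))
              - orthogonalProjection ((Γ (famA T.toFun 𝒮 t)).map
                (Jmap.toLinearMap : WithLp 2 (X × X) →ₗ[ℂ] WithLp 2 (X × X)))ᗮ w‖
            ≤ ‖(orthogonalProjection (Γ (famA T.adjoint.toFun 𝒮' t)) w : WithLp 2 (X × X))
              - orthogonalProjection (Γ (famA T.adjoint.toFun 𝒮' s)) w‖
              + ‖(orthogonalProjection (Γ (famA T.adjoint.toFun 𝒮' s)) w : WithLp 2 (X × X))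
              - orthogonalProjection ((Γ (famA T.toFun 𝒮 t)).map
                (Jmap.toLinearMap : WithLp 2 (X × X) →ₗ[ℂ] WithLp 2 (X × X)))ᗮ w‖ :=
              norm_sub_le_norm_sub_add_norm_sub _ _ _
          _ ≤ 2 * (2 * K' * (1 / n)) * ‖w‖ + 2 * (2 * K * (1 / n)) * ‖w‖ := by
              refine add_le_add (pU w) ?_
              rw [eq_orthogonalProjection_of_eq_submodule IH w]
              exact pW w
          _ = (2 * (2 * K' * (1 / n)) + 2 * (2 * K * (1 / n))) * ‖w‖ := by ring
  -- identify the endpoints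
  have h_eq1 : Γ (famA T.adjoint.toFun 𝒮' 1) = ((Γ (famA T.toFun 𝒮 1)).map
      (Jmap.toLinearMap : WithLp 2 (X × X) →ₗ[ℂ] WithLp 2 (X × X)))ᗮ := by
    have := claim n le_rfl
    rwa [div_self (ne_of_gt hnpos)] at this
  -- `S + T` is the endpoint of the pencil
  have hsum : S + T = famA T.toFun 𝒮 1 := by
    apply LinearPMap.ext (inf_eq_right.mpr hdom)
    intro x₀ hf hg
    suffices key : ∀ (x : (S + T).domain) (y : (famA T.toFun 𝒮 1).domain), (x : X) = y →
        (S + T) x = famA T.toFun 𝒮 1 y from key ⟨x₀, hf⟩ ⟨x₀, hg⟩ rfl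
    intro x y hxy
    show S ⟨(x : X), x.2.1⟩ + T ⟨(x : X), x.2.2⟩ = T.toFun y + ((1 : ℝ) : ℂ) • 𝒮 y
    rw [show (((1 : ℝ) : ℂ)) = 1 by norm_num, one_smul, h𝒮app y]
    have h1 : S ⟨(x : X), x.2.1⟩ = S ⟨(y : X), hdom y.2⟩ := by
      congr 1
      exact Subtype.ext hxy
    have h2 : T ⟨(x : X), x.2.2⟩ = T.toFun y := by
      have : (⟨(x : X), x.2.2⟩ : T.domain) = y := Subtype.ext hxy
      rw [this]
      rfl
    rw [h1, h2, add_comm]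
  have hsum' : S.adjoint + T.adjoint = famA T.adjoint.toFun 𝒮' 1 := by
    apply LinearPMap.ext (inf_eq_right.mpr hdom')
    intro x₀ hf hg
    suffices key : ∀ (x : (S.adjoint + T.adjoint).domain) (y : (famA T.adjoint.toFun 𝒮' 1).domain),
        (x : X) = y → (S.adjoint + T.adjoint) x = famA T.adjoint.toFun 𝒮' 1 y from
      key ⟨x₀, hf⟩ ⟨x₀, hg⟩ rfl
    intro x y hxy
    show S.adjoint ⟨(x : X), x.2.1⟩ + T.adjoint ⟨(x : X), x.2.2⟩
      = T.adjoint.toFun y + ((1 : ℝ) : ℂ) • 𝒮' y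
    rw [show (((1 : ℝ) : ℂ)) = 1 by norm_num, one_smul, h𝒮'app y]
    have h1 : S.adjoint ⟨(x : X), x.2.1⟩ = S.adjoint ⟨(y : X), hdom' y.2⟩ := by
      congr 1
      exact Subtype.ext hxy
    have h2 : T.adjoint ⟨(x : X), x.2.2⟩ = T.adjoint.toFun y := by
      have : (⟨(x : X), x.2.2⟩ : T.adjoint.domain) = y := Subtype.ext hxy
      rw [this]
      rfl
    rw [h1, h2, add_comm]
  constructor
  · rw [hsum]
    exact hAc 1 zero_le_one le_rfl
  · rw [hsum, hsum']
    apply Γ_injective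
    rw [h_eq1]
    exact Γ_adjoint_eq hTd

end Main
end
end

section
/- Let H be a closed operator on a Hilbert space with nonempty resolvent set. Then the spectrum satisfies σ(H²) = {λ² : λ ∈ σ(H)}. -/
open LinearPMap

/-- `R` is the (bounded, everywhere defined) resolvent of `T` at `λ`, i.e. `R = (T - λ)⁻¹`;
its existence means `λ ∈ ρ(T)`. -/
def IsResolventAt {X : Type*} [NormedAddCommGroup X] [InnerProductSpace ℂ X]
    (T : X →ₗ.[ℂ] X) (l : ℂ) (R : X →L[ℂ] X) : Prop :=
  (∀ y : X, ∃ h : R y ∈ T.domain, T ⟨R y, h⟩ - l • R y = y) ∧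
    ∀ x : T.domain, R (T x - l • (x : X)) = x

/-- Direction 1: if μ and -μ are in the resolvent set of H, then μ² is in ρ(H²). -/
theorem aux_res_sq {X : Type*} [NormedAddCommGroup X] [InnerProductSpace ℂ X]
    (H H2 : X →ₗ.[ℂ] X) (hH2 : IsPMapComp H H H2) (μ : ℂ)
    (Rp Rm : X →L[ℂ] X) (hp : IsResolventAt H μ Rp) (hm : IsResolventAt H (-μ) Rm) :
    IsResolventAt H2 (μ ^ 2) (Rp.comp Rm) := by
  constructor
  · intro y
    obtain ⟨hb, hbe⟩ := hm.1 y
    obtain ⟨ha, hae⟩ := hp.1 (Rm y)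
    set b := Rm y with hbdef
    set a := Rp b with hadef
    -- H a = b + μ • a
    have hHa : H ⟨a, ha⟩ = b + μ • a := by
      have := hae
      linear_combination (norm := module) this
    have hHaDom : H ⟨a, ha⟩ ∈ H.domain := by
      rw [hHa]; exact H.domain.add_mem hb (H.domain.smul_mem μ ha)
    have haD2 : a ∈ H2.domain := (hH2.1 a).mpr ⟨ha, hHaDom⟩
    refine ⟨haD2, ?_⟩
    have hcomp := hH2.2 ⟨a, haD2⟩ ha hHaDom
    have h1 : (⟨H ⟨a, ha⟩, hHaDom⟩ : H.domain) = ⟨b, hb⟩ + μ • ⟨a, ha⟩ := by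
      apply Subtype.ext; simpa using hHa
    have h2 : H ⟨H ⟨a, ha⟩, hHaDom⟩ = H ⟨b, hb⟩ + μ • H ⟨a, ha⟩ := by
      rw [h1, H.map_add, H.map_smul]
    show (H2 ⟨a, haD2⟩ : X) - μ ^ 2 • a = y
    rw [hcomp, h2, hHa]
    have hbe' : H ⟨b, hb⟩ = y - μ • b := by linear_combination (norm := module) hbe
    rw [hbe']
    ring_nf
    module
  · intro x
    obtain ⟨hx, hx'⟩ := (hH2.1 x).mp x.2
    have hxx : (⟨(x : X), hx⟩ : H.domain) = ⟨(x : X), hx⟩ := rfl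
    set c : X := H ⟨(x : X), hx⟩ - μ • (x : X) with hcdef
    have hc : c ∈ H.domain := H.domain.sub_mem hx' (H.domain.smul_mem μ hx)
    have hcsub : (⟨c, hc⟩ : H.domain) = ⟨H ⟨(x : X), hx⟩, hx'⟩ - μ • ⟨(x : X), hx⟩ := by
      apply Subtype.ext; rfl
    have hcomp := hH2.2 x hx hx'
    have key : H2 x - μ ^ 2 • (x : X) = H ⟨c, hc⟩ - (-μ) • c := by
      rw [hcomp, hcsub, H.map_sub, H.map_smul, hcdef]
      ring_nf
      module
    rw [ContinuousLinearMap.comp_apply, key, hm.2 ⟨c, hc⟩]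
    exact hp.2 ⟨(x : X), hx⟩

/-- Direction 2: if μ² ∈ ρ(H²), then μ ∈ ρ(H). -/
theorem aux_res_of_sq {X : Type*} [NormedAddCommGroup X] [InnerProductSpace ℂ X]
    [CompleteSpace X] (H H2 : X →ₗ.[ℂ] X) (hH : H.IsClosed) (hH2 : IsPMapComp H H H2)
    (μ : ℂ) (R : X →L[ℂ] X) (hR : IsResolventAt H2 (μ ^ 2) R) :
    ∃ S : X →L[ℂ] X, IsResolventAt H μ S := by
  have hmem2 : ∀ y : X, R y ∈ H2.domain := fun y => (hR.1 y).1
  have hmemH : ∀ y : X, R y ∈ H.domain := fun y => ((hH2.1 (R y)).mp (hmem2 y)).1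
  have hmemH' : ∀ y : X, H ⟨R y, hmemH y⟩ ∈ H.domain := by
    intro y
    obtain ⟨h, h'⟩ := (hH2.1 (R y)).mp (hmem2 y)
    exact h'
  -- the candidate inverse as a plain linear map
  let S₀ : X →ₗ[ℂ] X :=
    H.toFun.comp (LinearMap.codRestrict H.domain R.toLinearMap hmemH) + μ • R.toLinearMap
  have hS₀ : ∀ y : X, S₀ y = H ⟨R y, hmemH y⟩ + μ • R y := fun y => rfl
  -- key resolvent identity: H (H (R y)) = y + μ² • R y
  have hkey : ∀ y : X, H ⟨H ⟨R y, hmemH y⟩, hmemH' y⟩ = y + μ ^ 2 • R y := by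
    intro y
    obtain ⟨h2d, he⟩ := hR.1 y
    have hcomp : (H2 ⟨R y, hmem2 y⟩ : X) = H ⟨H ⟨R y, hmemH y⟩, hmemH' y⟩ :=
      hH2.2 ⟨R y, hmem2 y⟩ (hmemH y) (hmemH' y)
    have : (H2 ⟨R y, hmem2 y⟩ : X) = y + μ ^ 2 • R y := by
      have : (H2 ⟨R y, h2d⟩ : X) - μ ^ 2 • R y = y := he
      linear_combination (norm := module) this
    rw [← hcomp, this]
  -- continuity via the closed graph theorem
  have hcont : Continuous S₀ := by
    apply S₀.continuous_of_seq_closed_graph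
    intro u x w hu hSu
    have hRu : Filter.Tendsto (fun n => R (u n)) Filter.atTop (nhds (R x)) :=
      (R.continuous.tendsto x).comp hu
    have hHu : Filter.Tendsto (fun n => H ⟨R (u n), hmemH (u n)⟩) Filter.atTop
        (nhds (w - μ • R x)) := by
      have : (fun n => H ⟨R (u n), hmemH (u n)⟩) = fun n => S₀ (u n) - μ • R (u n) := by
        funext n; rw [hS₀]; abel
      rw [this]
      exact hSu.sub (hRu.const_smul μ)
    have hmem : (R x, w - μ • R x) ∈ H.graph := by
      refine hH.mem_of_tendsto (hRu.prodMk_nhds hHu) ?_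
      exact Filter.Eventually.of_forall fun n => H.mem_graph ⟨R (u n), hmemH (u n)⟩
    rw [LinearPMap.mem_graph_iff] at hmem
    obtain ⟨v, hv1, hv2⟩ := hmem
    have hveq : v = ⟨R x, hmemH x⟩ := Subtype.ext hv1
    have hv2' : (H ⟨R x, hmemH x⟩ : X) = w - μ • R x := by rw [← hveq]; exact hv2
    rw [hS₀, hv2']
    abel
  -- the first resolvent property
  have prop1 : ∀ y : X, ∃ h : S₀ y ∈ H.domain, (H ⟨S₀ y, h⟩ : X) - μ • S₀ y = y := by
    intro y
    have hmemS : S₀ y ∈ H.domain := by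
      rw [hS₀]
      exact H.domain.add_mem (hmemH' y) (H.domain.smul_mem μ (hmemH y))
    refine ⟨hmemS, ?_⟩
    have h1 : (⟨S₀ y, hmemS⟩ : H.domain)
        = ⟨H ⟨R y, hmemH y⟩, hmemH' y⟩ + μ • ⟨R y, hmemH y⟩ := by
      apply Subtype.ext; simpa using hS₀ y
    rw [h1, H.map_add, H.map_smul, hkey y, hS₀ y]
    module
  refine ⟨⟨S₀, hcont⟩, fun y => prop1 y, ?_⟩
  -- injectivity argument for the second resolvent property
  intro x
  show S₀ (H x - μ • (x : X)) = (x : X)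
  obtain ⟨h, h'⟩ := prop1 (H x - μ • (x : X))
  have hHSy : (H ⟨S₀ (H x - μ • (x : X)), h⟩ : X)
      = (H x - μ • (x : X)) + μ • S₀ (H x - μ • (x : X)) := by
    linear_combination (norm := module) h'
  set w : X := S₀ (H x - μ • (x : X)) with hw
  have hdm : w - (x : X) ∈ H.domain := H.domain.sub_mem h x.2
  have hdsub : (⟨w - (x : X), hdm⟩ : H.domain) = ⟨w, h⟩ - x := by
    apply Subtype.ext; simp
  have hHd : H ⟨w - (x : X), hdm⟩ = μ • (w - (x : X)) := by
    rw [hdsub, H.map_sub, hHSy]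
    module
  have hHdmem : H ⟨w - (x : X), hdm⟩ ∈ H.domain := by
    rw [hHd]; exact H.domain.smul_mem μ hdm
  have hd2 : w - (x : X) ∈ H2.domain := (hH2.1 _).mpr ⟨hdm, hHdmem⟩
  have hcomp : (H2 ⟨w - (x : X), hd2⟩ : X) = H ⟨H ⟨w - (x : X), hdm⟩, hHdmem⟩ :=
    hH2.2 ⟨w - (x : X), hd2⟩ hdm hHdmem
  have e2 : (⟨(H ⟨w - (x : X), hdm⟩ : X), hHdmem⟩ : H.domain) = μ • ⟨w - (x : X), hdm⟩ :=
    Subtype.ext (by simpa using hHd)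
  have hH2d : (H2 ⟨w - (x : X), hd2⟩ : X) = μ ^ 2 • (w - (x : X)) := by
    rw [hcomp, e2, H.map_smul, hHd]
    module
  have h3 : R ((H2 ⟨w - (x : X), hd2⟩ : X) - μ ^ 2 • (w - (x : X))) = w - (x : X) :=
    hR.2 ⟨w - (x : X), hd2⟩
  rw [hH2d, sub_self] at h3
  have hd0 : w - (x : X) = 0 := by simpa using h3.symm
  exact sub_eq_zero.mp hd0

/-- If `H` is a closed operator with nonempty resolvent set, then
`σ(H²) = {λ² : λ ∈ σ(H)}`, where the spectrum is the complement of the resolvent set. -/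
theorem spectrum_sq_eq_sq_spectrum
    {X : Type*} [NormedAddCommGroup X] [InnerProductSpace ℂ X] [CompleteSpace X]
    (H H2 : X →ₗ.[ℂ] X) (hH : H.IsClosed) (hH2 : IsPMapComp H H H2)
    (hres : ∃ (l : ℂ) (R : X →L[ℂ] X), IsResolventAt H l R) :
    ∀ z : ℂ, (¬∃ R : X →L[ℂ] X, IsResolventAt H2 z R) ↔
      ∃ l : ℂ, (¬∃ R : X →L[ℂ] X, IsResolventAt H l R) ∧ z = l ^ 2 := by

  intro z
  constructor
  · intro hz
    by_contra hcon
    push_neg at hcon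
    obtain ⟨μ, hμ⟩ : ∃ μ : ℂ, μ ^ 2 = z := IsAlgClosed.exists_pow_nat_eq z (by norm_num)
    obtain ⟨Rp, hp⟩ : ∃ Rp : X →L[ℂ] X, IsResolventAt H μ Rp := by
      by_contra hno
      exact hcon μ (by push_neg at hno; exact hno) hμ.symm
    obtain ⟨Rm, hm⟩ : ∃ Rm : X →L[ℂ] X, IsResolventAt H (-μ) Rm := by
      by_contra hno
      exact hcon (-μ) (by push_neg at hno; exact hno) (by rw [neg_pow, hμ]; ring)
    exact hz ⟨Rp.comp Rm, hμ ▸ aux_res_sq H H2 hH2 μ Rp Rm hp hm⟩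
  · rintro ⟨l, hl, rfl⟩ ⟨R, hR⟩
    exact hl (aux_res_of_sq H H2 hH hH2 l R hR)
end
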